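/- arXiv:2105.05223 — 6 statements merged into one kernel-verified Lean document; each statement's English description precedes it below -/
import Mathlib

section
/- Let R be a commutative ring, G a group, F a family of subgroups of G, and S a G-set all of whose point stabilizers belong to F. Then the RG-module R[S] (the free R-module on S, with G acting by permuting the basis) is relatively F-projective: for every F-strongly surjective G-equivariant map p : A → B of RG-modules and every G-equivariant R-linear map φ : R[S] → B, there exists a G-equivariant R-linear map Φ : R[S] → A with p ∘ Φ = φ. -/
open scoped BigOperators

universe u v w

namespace RelBdd

variable {G : Type u} [Group G]

/-- `F` is a family of subgroups of `G`: nonempty, closed under conjugation and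
closed under taking subgroups. -/
def IsFamily (F : Set (Subgroup G)) : Prop :=
  F.Nonempty ∧
    (∀ H ∈ F, ∀ g : G, Subgroup.map ((MulAut.conj g).toMonoidHom) H ∈ F) ∧
    ∀ H ∈ F, ∀ K : Subgroup G, K ≤ H → K ∈ F

/-- The `G`-set `G/F = ⨿_{H ∈ F} G/H`. -/
abbrev Cos (G : Type u) [Group G] (F : Set (Subgroup G)) : Type u :=
  Σ H : F, G ⧸ (H : Subgroup G)

instance (F : Set (Subgroup G)) : SMul G (Cos G F) :=
  ⟨fun g x => ⟨x.1, g • x.2⟩⟩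

instance (F : Set (Subgroup G)) : MulAction G (Cos G F) where
  one_smul := by
    rintro ⟨H, q⟩
    show (⟨H, (1 : G) • q⟩ : Cos G F) = ⟨H, q⟩
    rw [one_smul]
  mul_smul g h := by
    rintro ⟨H, q⟩
    show (⟨H, (g * h) • q⟩ : Cos G F) = ⟨H, g • h • q⟩
    rw [mul_smul]

/-- A function into a normed space is bounded. -/
def Bdd {α : Type*} {V : Type*} [Norm V] (f : α → V) : Prop :=
  ∃ C : ℝ, ∀ x, ‖f x‖ ≤ C

/-- The simplicial coboundary operator on `V`-valued cochains on a set `S`. -/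
def delta {S : Type*} {V : Type*} [AddCommGroup V] [Module ℝ V] (n : ℕ)
    (f : (Fin (n + 1) → S) → V) : (Fin (n + 2) → S) → V :=
  fun x => ∑ i : Fin (n + 2), ((-1 : ℝ) ^ (i : ℕ)) • f (fun j => x (i.succAbove j))

/-- `ℓ∞(S)`: the space of bounded real valued functions on `S`. -/
def Linf (S : Type v) : Submodule ℝ (S → ℝ) where
  carrier := {f | ∃ C : ℝ, ∀ s, |f s| ≤ C}
  add_mem' := by
    rintro f g ⟨C, hC⟩ ⟨D, hD⟩
    exact ⟨C + D, fun s => (abs_add_le _ _).trans (add_le_add (hC s) (hD s))⟩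
  zero_mem' := ⟨0, fun s => by simp⟩
  smul_mem' := by
    rintro r f ⟨C, hC⟩
    refine ⟨|r| * C, fun s => ?_⟩
    show |r * f s| ≤ |r| * C
    rw [abs_mul]
    exact mul_le_mul_of_nonneg_left (hC s) (abs_nonneg r)

/-- The constant function `r` as an element of `ℓ∞(S)`. -/
def constLinf (S : Type v) (r : ℝ) : Linf S :=
  ⟨fun _ => r, ⟨|r|, fun _ => le_rfl⟩⟩

/-- Precomposition with a map `φ : S → S` as a linear endomorphism of `ℓ∞(S)`. -/
def compL {S : Type v} (φ : S → S) : Linf S →ₗ[ℝ] Linf S where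
  toFun f := ⟨fun s => (f : S → ℝ) (φ s), by
    obtain ⟨C, hC⟩ := f.2
    exact ⟨C, fun s => hC (φ s)⟩⟩
  map_add' f g := by ext s; rfl
  map_smul' r f := by ext s; rfl

/-- There exists a `K`-invariant mean on the `K`-set `S`. -/
def InvariantMean (K : Type u) (S : Type v) [Group K] [MulAction K S] : Prop :=
  ∃ m : Linf S →ₗ[ℝ] ℝ,
    m (constLinf S 1) = 1 ∧
    (∀ f : Linf S, (∀ s, 0 ≤ (f : S → ℝ) s) → 0 ≤ m f) ∧
    ∀ (g : K) (f : Linf S), m (compL (fun s => g⁻¹ • s) f) = m f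

/-- The restriction `F|_H = {L ∩ H : L ∈ F}` of a collection of subgroups of `G` to
a collection of subgroups of `H`. -/
def restrictedFamily (F : Set (Subgroup G)) (H : Subgroup G) : Set (Subgroup H) :=
  {K | ∃ L ∈ F, K = L.subgroupOf H}

/-- `K` is amenable relative to the collection `𝒦` of its subgroups: the `K`-set
`⨿_{L ∈ 𝒦} K/L` admits a `K`-invariant mean. -/
def RelativelyAmenable (K : Type u) [Group K] (𝒦 : Set (Subgroup K)) : Prop :=
  InvariantMean K (Cos K 𝒦)

/-- The family generated by a set `ℋ` of subgroups: all subgroups of conjugates of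
members of `ℋ`, together with the trivial subgroup. -/
def famGen (ℋ : Set (Subgroup G)) : Set (Subgroup G) :=
  {K | K = ⊥ ∨ ∃ H ∈ ℋ, ∃ g : G, ∀ x ∈ K, g⁻¹ * x * g ∈ H}

/-- The left multiplication action of `g ∈ G` on a normed `ℝG`-module `W`, as a
continuous linear map. -/
def smulCLM {W : Type w} [NormedAddCommGroup W] [NormedSpace ℝ W] [DistribMulAction G W]
    [SMulCommClass G ℝ W] (hW : ∀ (g : G) (w : W), ‖g • w‖ = ‖w‖) (g : G) : W →L[ℝ] W :=
  LinearMap.mkContinuous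
    { toFun := fun w => g • w
      map_add' := fun a b => smul_add g a b
      map_smul' := fun r w => smul_comm g r w }
    1 (fun w => by simp [hW])

/-!
For `s ∈ S`, an `F`-strong section `τ` for the stabilizer `G_s ∈ F` sends `φ(e_s)` to a lift
of it fixed by `G_s`. Choosing such a lift at one point of each orbit and transporting it by `G`
gives a well-defined equivariant lift `f : S → A` of `s ↦ φ(e_s)`, and `Φ` is its linear
extension to the free module `R[S]`.
-/

open MulAction Finsupp

section EquivariantExtension

variable {S A : Type*} [MulAction G S] [MulAction G A]

theorem smul_eq_smul_of_stabilizer_le {s : S} {a : A} (h : stabilizer G s ≤ stabilizer G a)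
    {g g' : G} (hg : g • s = g' • s) : g • a = g' • a := by
  have hmem : g'⁻¹ * g ∈ stabilizer G s := by
    rw [mem_stabilizer_iff, mul_smul, hg, inv_smul_smul]
  calc g • a = g' • (g'⁻¹ * g) • a := by rw [smul_smul, mul_inv_cancel_left]
    _ = g' • a := by rw [mem_stabilizer_iff.mp (h hmem)]

theorem exists_orbit_representative :
    ∃ (r : S → S) (γ : S → G), (∀ (g : G) s, r (g • s) = r s) ∧ ∀ s, γ s • r s = s := by
  choose γ hγ using fun s : S =>
    mem_orbit_iff.mp (mem_orbit_symm.mp (orbitRel_apply.mp (Quotient.exact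
      (Quotient.out_eq (⟦s⟧ : orbitRel.Quotient G S)))))
  refine ⟨fun s => (⟦s⟧ : orbitRel.Quotient G S).out, γ, fun g s => ?_, hγ⟩
  exact congrArg Quotient.out (Quotient.sound (mem_orbit s g))

theorem exists_equivariant_of_stabilizer_le (P : S → A → Prop)
    (hP : ∀ (g : G) s a, P s a → P (g • s) (g • a))
    (h : ∀ s, ∃ a, stabilizer G s ≤ stabilizer G a ∧ P s a) :
    ∃ f : S → A, (∀ (g : G) s, f (g • s) = g • f s) ∧ ∀ s, P s (f s) := by
  choose a ha hPa using h
  obtain ⟨r, γ, hr, hγ⟩ := exists_orbit_representative (G := G) (S := S)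
  refine ⟨fun s => γ s • a (r s), fun g s => ?_, fun s => ?_⟩
  · have htransport : γ (g • s) • r s = (g * γ s) • r s := by
      rw [← hr g s, hγ, hr, mul_smul, hγ]
    simp only [hr, smul_eq_smul_of_stabilizer_le (ha _) htransport, mul_smul]
  · simpa only [hγ] using hP (γ s) _ _ (hPa (r s))

end EquivariantExtension

section FreeModule

variable {R S A : Type*} [Semiring R] [MulAction G S]
  [AddCommMonoid A] [Module R A] [DistribMulAction G A] [SMulCommClass G R A]

theorem linearCombination_mapDomain_smul {f : S → A} (hf : ∀ (g : G) s, f (g • s) = g • f s)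
    (g : G) (x : S →₀ R) :
    linearCombination R f (mapDomain (fun s => g • s) x) = g • linearCombination R f x := by
  rw [linearCombination_mapDomain, linearCombination_apply, linearCombination_apply, smul_sum]
  simp only [Function.comp_def, hf, smul_comm g]

theorem map_single_smul {B : Type*} [AddCommMonoid B] [Module R B] [DistribMulAction G B]
    {φ : (S →₀ R) →ₗ[R] B}
    (hφ : ∀ (g : G) (x : S →₀ R), φ (mapDomain (fun s => g • s) x) = g • φ x)
    (g : G) (s : S) (r : R) : φ (single (g • s) r) = g • φ (single s r) := by
  rw [← hφ, mapDomain_single]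

end FreeModule

theorem free_module_relatively_projective_general (R : Type w) [CommRing R]
    (G : Type u) [Group G] (F : Set (Subgroup G))
    (S : Type v) [MulAction G S] (hS : ∀ s : S, MulAction.stabilizer G s ∈ F)
    (A : Type w) [AddCommGroup A] [Module R A] [DistribMulAction G A] [SMulCommClass G R A]
    (B : Type w) [AddCommGroup B] [Module R B] [DistribMulAction G B] [SMulCommClass G R B]
    (p : A →ₗ[R] B) (hp : ∀ (g : G) (a : A), p (g • a) = g • p a)
    (hstrong : ∀ H ∈ F, ∃ τ : B →ₗ[R] A,
      (∀ h : G, h ∈ H → ∀ b, τ (h • b) = h • τ b) ∧ ∀ b, p (τ b) = b)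
    (φ : (S →₀ R) →ₗ[R] B)
    (hφ : ∀ (g : G) (x : S →₀ R), φ (Finsupp.mapDomain (fun s => g • s) x) = g • φ x) :
    ∃ Φ : (S →₀ R) →ₗ[R] A,
      (∀ (g : G) (x : S →₀ R), Φ (Finsupp.mapDomain (fun s => g • s) x) = g • Φ x) ∧
      ∀ x, p (Φ x) = φ x := by
  have hlift : ∀ s : S, ∃ a : A,
      stabilizer G s ≤ stabilizer G a ∧ p a = φ (single s 1) := fun s => by
    obtain ⟨τ, hτ, hpτ⟩ := hstrong _ (hS s)
    refine ⟨τ (φ (single s 1)), fun h hh => ?_, hpτ _⟩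
    rw [mem_stabilizer_iff, ← hτ h hh, ← map_single_smul hφ, mem_stabilizer_iff.mp hh]
  obtain ⟨f, hf, hpf⟩ := exists_equivariant_of_stabilizer_le
    (fun s a => p a = φ (single s 1))
    (fun g s a h => by simp only [hp, h, map_single_smul hφ]) hlift
  refine ⟨linearCombination R f, linearCombination_mapDomain_smul hf, fun x => ?_⟩
  have hcomp : p ∘ₗ linearCombination R f = φ := lhom_ext fun s r => by
    rw [LinearMap.comp_apply, linearCombination_single, map_smul, hpf, ← map_smul, smul_single_one]
  exact LinearMap.congr_fun hcomp x

/-- If `S` is a `G`-set whose point stabilizers all belong to the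
family `F`, then the `RG`-module `R[S]` (with `G` permuting the basis) is relatively
`F`-projective: every `G`-equivariant map from it lifts along any `F`-strongly
surjective `G`-equivariant map `p : A → B` of `RG`-modules. -/
theorem free_module_relatively_projective (R : Type w) [CommRing R]
    (G : Type u) [Group G] (F : Set (Subgroup G)) (hF : IsFamily F)
    (S : Type v) [MulAction G S] (hS : ∀ s : S, MulAction.stabilizer G s ∈ F)
    (A : Type w) [AddCommGroup A] [Module R A] [DistribMulAction G A] [SMulCommClass G R A]
    (B : Type w) [AddCommGroup B] [Module R B] [DistribMulAction G B] [SMulCommClass G R B]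
    (p : A →ₗ[R] B) (hp : ∀ (g : G) (a : A), p (g • a) = g • p a)
    (hstrong : ∀ H ∈ F, ∃ τ : B →ₗ[R] A,
      (∀ h : G, h ∈ H → ∀ b, τ (h • b) = h • τ b) ∧ ∀ b, p (τ b) = b)
    (φ : (S →₀ R) →ₗ[R] B)
    (hφ : ∀ (g : G) (x : S →₀ R), φ (Finsupp.mapDomain (fun s => g • s) x) = g • φ x) :
    ∃ Φ : (S →₀ R) →ₗ[R] A,
      (∀ (g : G) (x : S →₀ R), Φ (Finsupp.mapDomain (fun s => g • s) x) = g • Φ x) ∧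
      ∀ x, p (Φ x) = φ x :=
  free_module_relatively_projective_general R G F S hS A B p hp hstrong φ hφ

end RelBdd
end

section
/- Let G be a group, F a family of subgroups of G, S a G-set all of whose point stabilizers belong to F, and V a normed ℝG-module. Let B(S,V) denote the normed ℝG-module of bounded functions S → V with the supremum norm and the action (g·f)(s) = g·f(g⁻¹·s). Then B(S,V) is relatively F-injective: for every F-strongly injective G-equivariant bounded linear map i : A → B of normed ℝG-modules and every G-equivariant bounded linear map ψ : A → B(S,V), there exists a G-equivariant bounded linear map Ψ : B → B(S,V) with Ψ ∘ i = ψ. -/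
/-! Since every stabilizer `Stab(s)` lies in `F`, strong injectivity of `i` gives
`Stab(s)`-equivariant retractions `σ_s : B → A` of `i` of norm at most `K`. Choosing them at
orbit representatives and transporting them along the orbits, `σ_{g • s} = g σ_s g⁻¹`, makes
the family `G`-equivariant, and it stays uniformly bounded because `G` acts by isometries.
Then `Ψ b s = ψ (σ_s b) s` is the required extension. -/

open scoped BigOperators

universe u v w

namespace RelBdd

variable {G : Type u} [Group G]

theorem _root_.MulAction.exists_orbit_transversal (G : Type*) [Group G] (S : Type*)
    [MulAction G S] :
    ∃ (rep : S → S) (t : S → G), (∀ s, t s • rep s = s) ∧ ∀ (g : G) s, rep (g • s) = rep s := by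
  let rep : S → S := fun s => (⟦s⟧ : MulAction.orbitRel.Quotient G S).out
  have hmem (s : S) : s ∈ MulAction.orbit G (rep s) :=
    MulAction.orbitRel_apply.mp (Quotient.exact (Quotient.out_eq _).symm)
  choose t ht using hmem
  exact ⟨rep, t, ht, fun g s => by simp only [rep, MulAction.orbitRel.Quotient.quotient_smul_eq]⟩

section smulConj

variable {A : Type*} [AddCommGroup A] [Module ℝ A] [DistribMulAction G A] [SMulCommClass G ℝ A]
  {B : Type*} [AddCommGroup B] [Module ℝ B] [DistribMulAction G B] [SMulCommClass G ℝ B]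

/-- Not an instance: `B →ₗ[ℝ] A` already carries the action of `G` by postcomposition. -/
def smulConj (g : G) (σ : B →ₗ[ℝ] A) : B →ₗ[ℝ] A :=
  DistribSMul.toLinearMap ℝ A g ∘ₗ σ ∘ₗ DistribSMul.toLinearMap ℝ B g⁻¹

@[simp]
theorem smulConj_apply (g : G) (σ : B →ₗ[ℝ] A) (b : B) :
    smulConj g σ b = g • σ (g⁻¹ • b) :=
  rfl

theorem smulConj_mul (g h : G) (σ : B →ₗ[ℝ] A) :
    smulConj (g * h) σ = smulConj g (smulConj h σ) := by
  ext b
  simp [mul_smul]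

theorem smulConj_eq_self {H : Subgroup G} {σ : B →ₗ[ℝ] A}
    (hσ : ∀ h ∈ H, ∀ b, σ (h • b) = h • σ b) {h : G} (hh : h ∈ H) : smulConj h σ = σ := by
  ext b
  rw [smulConj_apply, hσ _ (inv_mem hh), smul_inv_smul]

theorem smulConj_eq_of_smul_eq {S : Type*} [MulAction G S] {r : S} {σ : B →ₗ[ℝ] A}
    (hσ : ∀ h ∈ MulAction.stabilizer G r, ∀ b, σ (h • b) = h • σ b) {g₁ g₂ : G}
    (hg : g₁ • r = g₂ • r) : smulConj g₁ σ = smulConj g₂ σ := by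
  have hstab : g₂⁻¹ * g₁ ∈ MulAction.stabilizer G r := by
    rw [MulAction.mem_stabilizer_iff, mul_smul, hg, inv_smul_smul]
  rw [← mul_inv_cancel_left g₂ g₁, smulConj_mul, smulConj_eq_self hσ hstab]

theorem exists_smulConj_equivariant {S : Type*} [MulAction G S] (σ₀ : S → B →ₗ[ℝ] A)
    (hσ₀ : ∀ s, ∀ h ∈ MulAction.stabilizer G s, ∀ b, σ₀ s (h • b) = h • σ₀ s b) :
    ∃ σ : S → B →ₗ[ℝ] A, (∀ (g : G) s, σ (g • s) = smulConj g (σ s)) ∧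
      ∀ s, ∃ (g : G) (r : S), σ s = smulConj g (σ₀ r) := by
  obtain ⟨rep, t, ht, hrep⟩ := MulAction.exists_orbit_transversal G S
  refine ⟨fun s => smulConj (t s) (σ₀ (rep s)), fun g s => ?_, fun s => ⟨t s, rep s, rfl⟩⟩
  dsimp only
  rw [← smulConj_mul, hrep]
  refine smulConj_eq_of_smul_eq (hσ₀ _) ?_
  rw [mul_smul, ht, ← hrep g, ht]

theorem leftInverse_smulConj {i : A → B} (hi : ∀ (g : G) a, i (g • a) = g • i a)
    {σ : B →ₗ[ℝ] A} (hσ : Function.LeftInverse σ i) (g : G) :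
    Function.LeftInverse (smulConj g σ) i := fun a => by
  rw [smulConj_apply, ← hi, hσ, smul_inv_smul]

end smulConj

section Normed

variable {A : Type*} [SeminormedAddCommGroup A] [NormedSpace ℝ A] [DistribMulAction G A]
  [SMulCommClass G ℝ A] (hA : ∀ (g : G) (a : A), ‖g • a‖ = ‖a‖)
  {B : Type*} [SeminormedAddCommGroup B] [NormedSpace ℝ B] [DistribMulAction G B]
  [SMulCommClass G ℝ B] (hB : ∀ (g : G) (b : B), ‖g • b‖ = ‖b‖)
include hA hB

theorem norm_smulConj_apply_le {K : ℝ} {σ : B →ₗ[ℝ] A} (hσ : ∀ b, ‖σ b‖ ≤ K * ‖b‖)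
    (g : G) (b : B) : ‖smulConj g σ b‖ ≤ K * ‖b‖ := by
  simpa only [smulConj_apply, hA, hB] using hσ (g⁻¹ • b)

theorem exists_equivariant_retractions {S : Type*} [MulAction G S] {i : A → B}
    (hi : ∀ (g : G) a, i (g • a) = g • i a) {K : ℝ}
    (hσ : ∀ s : S, ∃ σ : B →L[ℝ] A, ‖σ‖ ≤ K ∧
      (∀ h ∈ MulAction.stabilizer G s, ∀ b, σ (h • b) = h • σ b) ∧ ∀ a, σ (i a) = a) :
    ∃ σ : S → B →ₗ[ℝ] A, (∀ s b, ‖σ s b‖ ≤ K * ‖b‖) ∧ (∀ s, Function.LeftInverse (σ s) i) ∧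
      ∀ (g : G) s b, σ (g • s) (g • b) = g • σ s b := by
  choose σ₀ hσ₀norm hσ₀equiv hσ₀i using hσ
  obtain ⟨σ, hσequiv, hσconj⟩ :=
    exists_smulConj_equivariant (fun s => (σ₀ s : B →ₗ[ℝ] A)) hσ₀equiv
  refine ⟨σ, fun s => ?_, fun s => ?_, fun g s b => by rw [hσequiv, smulConj_apply, inv_smul_smul]⟩
  · obtain ⟨g, r, hs⟩ := hσconj s
    rw [hs]
    exact norm_smulConj_apply_le hA hB (fun b => (σ₀ r).le_of_opNorm_le (hσ₀norm r) b) g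
  · obtain ⟨g, r, hs⟩ := hσconj s
    rw [hs]
    exact leftInverse_smulConj hi (hσ₀i r) g

end Normed

theorem bounded_functions_relatively_injective_general (G : Type u) [Group G]
    (F : Set (Subgroup G))
    (S : Type v) [MulAction G S] (hS : ∀ s : S, MulAction.stabilizer G s ∈ F)
    (V : Type w) [NormedAddCommGroup V] [NormedSpace ℝ V] [DistribMulAction G V]
    (A : Type w) [NormedAddCommGroup A] [NormedSpace ℝ A] [DistribMulAction G A]
    [SMulCommClass G ℝ A] (hA : ∀ (g : G) (a : A), ‖g • a‖ = ‖a‖)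
    (B : Type w) [NormedAddCommGroup B] [NormedSpace ℝ B] [DistribMulAction G B]
    [SMulCommClass G ℝ B] (hB : ∀ (g : G) (b : B), ‖g • b‖ = ‖b‖)
    (i : A →L[ℝ] B) (hi : ∀ (g : G) (a : A), i (g • a) = g • i a)
    (hstrong : ∃ K : ℝ, 0 ≤ K ∧ ∀ H ∈ F, ∃ σ : B →L[ℝ] A,
      ‖σ‖ ≤ K ∧ (∀ h : G, h ∈ H → ∀ b, σ (h • b) = h • σ b) ∧ ∀ a, σ (i a) = a)
    (ψ : A →ₗ[ℝ] (S → V))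
    (hψbdd : ∃ C : ℝ, ∀ (a : A) (s : S), ‖ψ a s‖ ≤ C * ‖a‖)
    (hψequiv : ∀ (g : G) (a : A) (s : S), ψ (g • a) s = g • ψ a (g⁻¹ • s)) :
    ∃ Ψ : B →ₗ[ℝ] (S → V),
      (∃ C : ℝ, ∀ (b : B) (s : S), ‖Ψ b s‖ ≤ C * ‖b‖) ∧
      (∀ (g : G) (b : B) (s : S), Ψ (g • b) s = g • Ψ b (g⁻¹ • s)) ∧
      ∀ a, Ψ (i a) = ψ a := by
  obtain ⟨K, -, hσ⟩ := hstrong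
  obtain ⟨C, hC⟩ := hψbdd
  obtain ⟨σ, hσnorm, hσi, hσequiv⟩ :=
    exists_equivariant_retractions hA hB hi (S := S) fun s => hσ _ (hS s)
  refine ⟨LinearMap.pi fun s => LinearMap.proj s ∘ₗ ψ ∘ₗ σ s, ⟨max C 0 * K, fun b s => ?_⟩,
    fun g b s => ?_, fun a => funext fun s => ?_⟩ <;>
    simp only [LinearMap.pi_apply, LinearMap.comp_apply, LinearMap.proj_apply]
  · calc ‖ψ (σ s b) s‖ ≤ max C 0 * ‖σ s b‖ :=
          (hC _ s).trans (by gcongr; exact le_max_left C 0)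
      _ ≤ max C 0 * (K * ‖b‖) := by gcongr; exact hσnorm s b
      _ = max C 0 * K * ‖b‖ := (mul_assoc _ _ _).symm
  · rw [← hψequiv, ← hσequiv, smul_inv_smul]
  · rw [hσi]

/-- If `S` is a `G`-set whose point stabilizers all belong to the
family `F` and `V` is a normed `ℝG`-module, then the normed `ℝG`-module `B(S,V)` of
bounded functions `S → V` (sup norm, action `(g • f) s = g • f (g⁻¹ • s)`) is
relatively `F`-injective. -/
theorem bounded_functions_relatively_injective (G : Type u) [Group G]
    (F : Set (Subgroup G)) (hF : IsFamily F)
    (S : Type v) [MulAction G S] (hS : ∀ s : S, MulAction.stabilizer G s ∈ F)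
    (V : Type w) [NormedAddCommGroup V] [NormedSpace ℝ V] [DistribMulAction G V]
    [SMulCommClass G ℝ V] (hV : ∀ (g : G) (v : V), ‖g • v‖ = ‖v‖)
    (A : Type w) [NormedAddCommGroup A] [NormedSpace ℝ A] [DistribMulAction G A]
    [SMulCommClass G ℝ A] (hA : ∀ (g : G) (a : A), ‖g • a‖ = ‖a‖)
    (B : Type w) [NormedAddCommGroup B] [NormedSpace ℝ B] [DistribMulAction G B]
    [SMulCommClass G ℝ B] (hB : ∀ (g : G) (b : B), ‖g • b‖ = ‖b‖)
    (i : A →L[ℝ] B) (hi : ∀ (g : G) (a : A), i (g • a) = g • i a)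
    (hstrong : ∃ K : ℝ, 0 ≤ K ∧ ∀ H ∈ F, ∃ σ : B →L[ℝ] A,
      ‖σ‖ ≤ K ∧ (∀ h : G, h ∈ H → ∀ b, σ (h • b) = h • σ b) ∧ ∀ a, σ (i a) = a)
    (ψ : A →ₗ[ℝ] (S → V))
    (hψbdd : ∃ C : ℝ, ∀ (a : A) (s : S), ‖ψ a s‖ ≤ C * ‖a‖)
    (hψequiv : ∀ (g : G) (a : A) (s : S), ψ (g • a) s = g • ψ a (g⁻¹ • s)) :
    ∃ Ψ : B →ₗ[ℝ] (S → V),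
      (∃ C : ℝ, ∀ (b : B) (s : S), ‖Ψ b s‖ ≤ C * ‖b‖) ∧
      (∀ (g : G) (b : B) (s : S), Ψ (g • b) s = g • Ψ b (g⁻¹ • s)) ∧
      ∀ a, Ψ (i a) = ψ a :=
  bounded_functions_relatively_injective_general G F S hS V A hA B hB i hi hstrong ψ hψbdd hψequiv

end RelBdd
end

section
/- Let R be a commutative ring, G a group, F a family of subgroups of G, and f : V → W a G-equivariant R-linear map of RG-modules. Let (P_*, ∂^P) be a nonnegatively graded chain complex of RG-modules with G-equivariant augmentation ε_P : P₀ → V such that each P_n is relatively F-projective, and let (C_*, ∂^C) together with a G-equivariant augmentation ε_C : C₀ → W be an F-strong resolution of W: the augmented complex is exact and for each H ∈ F there exist H-equivariant R-linear maps k^H_n : C_n → C_{n+1} (with C_{−1} = W) satisfying ∂^C_{n+1} ∘ k^H_n + k^H_{n−1} ∘ ∂^C_n = id. Then there exists a G-equivariant chain map f_* : P_* → C_* with ε_C ∘ f₀ = f ∘ ε_P, and any two such chain maps are G-equivariantly chain homotopic. -/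
/-! Both halves are the classical comparison argument, run degree by degree. Relative
`F`-projectivity of `P_n` lifts an equivariant map into `C_n` through the differential as soon as
its image lies in a submodule on which the differential has an `H`-equivariant section for every
`H ∈ F`; the contracting homotopies `k^H` provide such sections on cycles, because there
`∂ k^H = id - k^H ∂ = id`. Existence lifts `f ∘ ε_P` and then each `f_n ∘ ∂^P`; the homotopy
between two extensions is built by the same induction from their difference, which covers `0`. -/

open scoped BigOperators

universe u v w

namespace RelBdd

variable {G : Type u} [Group G]

section Statement6

/-- An `RG`-module `P` is relatively `F`-projective: every `G`-equivariant map from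
`P` lifts along any `F`-strongly surjective `G`-equivariant map of `RG`-modules. -/
def IsRelativelyProjective (R : Type w) [CommRing R] (G : Type u) [Group G]
    (F : Set (Subgroup G)) (P : Type w) [AddCommGroup P] [Module R P]
    [DistribMulAction G P] [SMulCommClass G R P] : Prop :=
  ∀ (A B : Type w) [AddCommGroup A] [Module R A] [DistribMulAction G A] [SMulCommClass G R A]
    [AddCommGroup B] [Module R B] [DistribMulAction G B] [SMulCommClass G R B],
    ∀ p : A →ₗ[R] B, (∀ (g : G) (a : A), p (g • a) = g • p a) →
    (∀ H ∈ F, ∃ τ : B →ₗ[R] A,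
      (∀ h : G, h ∈ H → ∀ b, τ (h • b) = h • τ b) ∧ ∀ b, p (τ b) = b) →
    ∀ φ : P →ₗ[R] B, (∀ (g : G) (x : P), φ (g • x) = g • φ x) →
    ∃ Φ : P →ₗ[R] A, (∀ (g : G) (x : P), Φ (g • x) = g • Φ x) ∧ ∀ x, p (Φ x) = φ x

theorem exists_seq_of_forall_exists_step {X : ℕ → Type*} (r : ∀ n, X n → X (n + 1) → Prop)
    {x₀ : X 0} {x₁ : X 1} (h₀ : r 0 x₀ x₁) (step : ∀ n a b, r n a b → ∃ c, r (n + 1) b c) :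
    ∃ x : ∀ n, X n, x 0 = x₀ ∧ ∀ n, r n (x n) (x (n + 1)) := by
  let pairs : ∀ n, {p : X n × X (n + 1) // r n p.1 p.2} := fun n =>
    Nat.rec ⟨(x₀, x₁), h₀⟩
      (fun n p => ⟨(p.1.2, (step n _ _ p.2).choose), (step n _ _ p.2).choose_spec⟩) n
  exact ⟨fun n => (pairs n).1.1, rfl, fun n => (pairs n).2⟩

def IsEquivariant (G : Type*) {R M N : Type*} [Semiring R] [AddCommMonoid M] [Module R M]
    [AddCommMonoid N] [Module R N] [SMul G M] [SMul G N] (φ : M →ₗ[R] N) : Prop :=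
  ∀ (g : G) (x : M), φ (g • x) = g • φ x

namespace IsEquivariant

section Semiring

variable {R M N L : Type*} [Semiring R] [AddCommMonoid M] [Module R M] [AddCommMonoid N]
  [Module R N] [AddCommMonoid L] [Module R L] [DistribMulAction G M] [DistribMulAction G N]
  [DistribMulAction G L]

theorem comp {φ : N →ₗ[R] L} {ψ : M →ₗ[R] N} (hφ : IsEquivariant G φ)
    (hψ : IsEquivariant G ψ) : IsEquivariant G (φ ∘ₗ ψ) := fun g x => by
  rw [LinearMap.comp_apply, hψ, hφ, LinearMap.comp_apply]

theorem smul_mem_ker {φ : M →ₗ[R] N} (hφ : IsEquivariant G φ) (g : G) {x : M}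
    (hx : x ∈ LinearMap.ker φ) : g • x ∈ LinearMap.ker φ := by
  rw [LinearMap.mem_ker] at hx ⊢
  rw [hφ, hx, smul_zero]

end Semiring

theorem sub {R M N : Type*} [Ring R] [AddCommGroup M] [Module R M] [AddCommGroup N] [Module R N]
    [DistribMulAction G M] [DistribMulAction G N] {φ ψ : M →ₗ[R] N} (hφ : IsEquivariant G φ)
    (hψ : IsEquivariant G ψ) : IsEquivariant G (φ - ψ) := fun g x => by
  simp only [LinearMap.sub_apply, hφ g, hψ g, smul_sub]

end IsEquivariant

abbrev stableSubmoduleAction {R M : Type*} [Semiring R] [AddCommMonoid M] [Module R M]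
    [DistribMulAction G M] (Z : Submodule R M) (hZ : ∀ (g : G) (x : M), x ∈ Z → g • x ∈ Z) :
    DistribMulAction G Z where
  smul g x := ⟨g • (x : M), hZ g x x.2⟩
  one_smul x := Subtype.ext (one_smul G (x : M))
  mul_smul g h x := Subtype.ext (mul_smul g h (x : M))
  smul_zero g := Subtype.ext (smul_zero g)
  smul_add g a b := Subtype.ext (smul_add g (a : M) (b : M))

theorem IsRelativelyProjective.exists_lift_of_section_on {R : Type w} [CommRing R]
    {F : Set (Subgroup G)} {Q A B : Type w}
    [AddCommGroup Q] [Module R Q] [DistribMulAction G Q] [SMulCommClass G R Q]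
    [AddCommGroup A] [Module R A] [DistribMulAction G A] [SMulCommClass G R A]
    [AddCommGroup B] [Module R B] [DistribMulAction G B] [SMulCommClass G R B]
    (hQ : IsRelativelyProjective R G F Q) {p : A →ₗ[R] B} (hp : IsEquivariant G p)
    {Z : Submodule R B} (hZ : ∀ (g : G) (b : B), b ∈ Z → g • b ∈ Z)
    (hsec : ∀ H ∈ F, ∃ τ : B →ₗ[R] A,
      (∀ h ∈ H, ∀ b, τ (h • b) = h • τ b) ∧ ∀ b ∈ Z, p (τ b) = b)
    {ψ : Q →ₗ[R] B} (hψ : IsEquivariant G ψ) (hψZ : ∀ x, ψ x ∈ Z) :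
    ∃ Ψ : Q →ₗ[R] A, IsEquivariant G Ψ ∧ ∀ x, p (Ψ x) = ψ x := by
  -- The sections `τ` become genuine sections of the restriction `p⁻¹(Z) → Z` of `p`.
  let A' : Submodule R A := Z.comap p
  let _ : DistribMulAction G A' := stableSubmoduleAction A' fun g a ha => by
    rw [Submodule.mem_comap, hp]
    exact hZ g _ ha
  let _ : SMulCommClass G R A' := ⟨fun g r x => Subtype.ext (smul_comm g r (x : A))⟩
  let _ : DistribMulAction G Z := stableSubmoduleAction Z hZ
  let _ : SMulCommClass G R Z := ⟨fun g r x => Subtype.ext (smul_comm g r (x : B))⟩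
  let p' : A' →ₗ[R] Z := p.restrict fun _ ha => ha
  have hsec' : ∀ H ∈ F, ∃ τ : Z →ₗ[R] A',
      (∀ h ∈ H, ∀ b, τ (h • b) = h • τ b) ∧ ∀ b, p' (τ b) = b := by
    intro H hH
    obtain ⟨τ, hτ, hpτ⟩ := hsec H hH
    refine ⟨τ.restrict fun b hb => ?_, fun h hh b => Subtype.ext (hτ h hh b),
      fun b => Subtype.ext (hpτ b b.2)⟩
    rw [Submodule.mem_comap, hpτ b hb]
    exact hb
  obtain ⟨Φ, hΦ, hp'Φ⟩ := hQ A' Z p' (fun g a => Subtype.ext (hp g a)) hsec'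
    (ψ.codRestrict Z hψZ) fun g x => Subtype.ext (hψ g x)
  exact ⟨A'.subtype ∘ₗ Φ, fun g x => congrArg Subtype.val (hΦ g x),
    fun x => congrArg Subtype.val (hp'Φ x)⟩

def HasContractingHomotopies {R W : Type*} [Semiring R] [AddCommMonoid W] [Module R W]
    [SMul G W] {C : ℕ → Type*} [∀ n, AddCommMonoid (C n)] [∀ n, Module R (C n)]
    [∀ n, SMul G (C n)] (F : Set (Subgroup G)) (dC : ∀ n, C (n + 1) →ₗ[R] C n)
    (εC : C 0 →ₗ[R] W) : Prop :=
  ∀ H ∈ F, ∃ (k : ∀ n, C n →ₗ[R] C (n + 1)) (km : W →ₗ[R] C 0),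
    (∀ (n : ℕ) (h : G), h ∈ H → ∀ x, k n (h • x) = h • k n x) ∧
    (∀ h : G, h ∈ H → ∀ w, km (h • w) = h • km w) ∧
    (∀ w, εC (km w) = w) ∧
    (∀ x : C 0, dC 0 (k 0 x) + km (εC x) = x) ∧
    ∀ (n : ℕ) (x : C (n + 1)), dC (n + 1) (k (n + 1) x) + k n (dC n x) = x

namespace HasContractingHomotopies

variable {R : Type w} [CommRing R] {F : Set (Subgroup G)}
  {W : Type w} [AddCommGroup W] [Module R W] [DistribMulAction G W]
  {C : ℕ → Type w} [∀ n, AddCommGroup (C n)] [∀ n, Module R (C n)]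
  [∀ n, DistribMulAction G (C n)] [∀ n, SMulCommClass G R (C n)]
  {dC : ∀ n, C (n + 1) →ₗ[R] C n} {εC : C 0 →ₗ[R] W}
  {Q : Type w} [AddCommGroup Q] [Module R Q] [DistribMulAction G Q] [SMulCommClass G R Q]

theorem exists_lift_augmentation [SMulCommClass G R W]
    (hC : HasContractingHomotopies F dC εC) (hεC : IsEquivariant G εC)
    (hQ : IsRelativelyProjective R G F Q) {ψ : Q →ₗ[R] W} (hψ : IsEquivariant G ψ) :
    ∃ Ψ : Q →ₗ[R] C 0, IsEquivariant G Ψ ∧ ∀ x, εC (Ψ x) = ψ x :=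
  hQ.exists_lift_of_section_on hεC (Z := ⊤) (fun _ _ _ => trivial)
    (fun H hH => by
      obtain ⟨_, km, -, hkm, hεkm, -⟩ := hC H hH
      exact ⟨km, hkm, fun w _ => hεkm w⟩)
    hψ fun _ => trivial

theorem exists_lift_zero (hC : HasContractingHomotopies F dC εC) (hεC : IsEquivariant G εC)
    (hd₀ : IsEquivariant G (dC 0)) (hQ : IsRelativelyProjective R G F Q) {ψ : Q →ₗ[R] C 0}
    (hψ : IsEquivariant G ψ) (hεψ : ∀ x, εC (ψ x) = 0) :
    ∃ Ψ : Q →ₗ[R] C 1, IsEquivariant G Ψ ∧ ∀ x, dC 0 (Ψ x) = ψ x :=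
  hQ.exists_lift_of_section_on hd₀ hεC.smul_mem_ker
    (fun H hH => by
      obtain ⟨k, _, hk, -, -, hk₀, -⟩ := hC H hH
      refine ⟨k 0, hk 0, fun x hx => ?_⟩
      simpa [LinearMap.mem_ker.mp hx] using hk₀ x)
    hψ hεψ

theorem exists_lift_succ (hC : HasContractingHomotopies F dC εC)
    (hdC : ∀ n, IsEquivariant G (dC n)) (hQ : IsRelativelyProjective R G F Q) (n : ℕ)
    {ψ : Q →ₗ[R] C (n + 1)} (hψ : IsEquivariant G ψ) (hdψ : ∀ x, dC n (ψ x) = 0) :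
    ∃ Ψ : Q →ₗ[R] C (n + 2), IsEquivariant G Ψ ∧ ∀ x, dC (n + 1) (Ψ x) = ψ x :=
  hQ.exists_lift_of_section_on (hdC (n + 1)) (hdC n).smul_mem_ker
    (fun H hH => by
      obtain ⟨k, -, hk, -, -, -, hkₙ⟩ := hC H hH
      refine ⟨k (n + 1), hk (n + 1), fun x hx => ?_⟩
      simpa [LinearMap.mem_ker.mp hx] using hkₙ n x)
    hψ hdψ

end HasContractingHomotopies

section FundamentalLemma

variable {R : Type w} [CommRing R] {F : Set (Subgroup G)}
  {V W : Type w} [AddCommGroup V] [Module R V] [DistribMulAction G V]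
  [AddCommGroup W] [Module R W] [DistribMulAction G W]
  {P : ℕ → Type w} [∀ n, AddCommGroup (P n)] [∀ n, Module R (P n)]
  [∀ n, DistribMulAction G (P n)] [∀ n, SMulCommClass G R (P n)]
  {dP : ∀ n, P (n + 1) →ₗ[R] P n} {εP : P 0 →ₗ[R] V}
  {C : ℕ → Type w} [∀ n, AddCommGroup (C n)] [∀ n, Module R (C n)]
  [∀ n, DistribMulAction G (C n)] [∀ n, SMulCommClass G R (C n)]
  {dC : ∀ n, C (n + 1) →ₗ[R] C n} {εC : C 0 →ₗ[R] W}

theorem exists_equivariant_chain_map [SMulCommClass G R W]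
    (hPproj : ∀ n, IsRelativelyProjective R G F (P n)) (hdP : ∀ n, IsEquivariant G (dP n))
    (hεP : IsEquivariant G εP) (hdPsq : ∀ (n : ℕ) (x : P (n + 2)), dP n (dP (n + 1) x) = 0)
    (hεPsq : ∀ x : P 1, εP (dP 0 x) = 0)
    (hC : HasContractingHomotopies F dC εC) (hdC : ∀ n, IsEquivariant G (dC n))
    (hεC : IsEquivariant G εC) {f : V →ₗ[R] W} (hf : IsEquivariant G f) :
    ∃ fs : ∀ n, P n →ₗ[R] C n, (∀ n, IsEquivariant G (fs n)) ∧
      (∀ x : P 0, εC (fs 0 x) = f (εP x)) ∧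
      ∀ (n : ℕ) (x : P (n + 1)), dC n (fs (n + 1) x) = fs n (dP n x) := by
  obtain ⟨f₀, hf₀, hεf₀⟩ := hC.exists_lift_augmentation hεC (hPproj 0) (hf.comp hεP)
  obtain ⟨f₁, hf₁, hdf₁⟩ := hC.exists_lift_zero hεC (hdC 0) (hPproj 1) (hf₀.comp (hdP 0))
    fun x => by simp [hεf₀, hεPsq]
  obtain ⟨fs, rfl, hfs⟩ := exists_seq_of_forall_exists_step
    (fun n (a : P n →ₗ[R] C n) (b : P (n + 1) →ₗ[R] C (n + 1)) =>
      IsEquivariant G a ∧ IsEquivariant G b ∧ ∀ x, dC n (b x) = a (dP n x))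
    ⟨hf₀, hf₁, hdf₁⟩ fun n a b ⟨_, hb, hdb⟩ => by
      obtain ⟨c, hc, hdc⟩ :=
        hC.exists_lift_succ hdC (hPproj (n + 2)) n (hb.comp (hdP (n + 1)))
          fun x => by simp [hdb, hdPsq]
      exact ⟨c, hb, hc, hdc⟩
  exact ⟨fs, fun n => (hfs n).1, hεf₀, fun n => (hfs n).2.2⟩

theorem exists_equivariant_nullhomotopy
    (hPproj : ∀ n, IsRelativelyProjective R G F (P n)) (hdP : ∀ n, IsEquivariant G (dP n))
    (hdPsq : ∀ (n : ℕ) (x : P (n + 2)), dP n (dP (n + 1) x) = 0)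
    (hC : HasContractingHomotopies F dC εC) (hdC : ∀ n, IsEquivariant G (dC n))
    (hεC : IsEquivariant G εC) {D : ∀ n, P n →ₗ[R] C n} (hD : ∀ n, IsEquivariant G (D n))
    (hεD : ∀ x, εC (D 0 x) = 0)
    (hdD : ∀ (n : ℕ) (x : P (n + 1)), dC n (D (n + 1) x) = D n (dP n x)) :
    ∃ h : ∀ n, P n →ₗ[R] C (n + 1), (∀ n, IsEquivariant G (h n)) ∧
      (∀ x : P 0, D 0 x = dC 0 (h 0 x)) ∧
      ∀ (n : ℕ) (x : P (n + 1)), D (n + 1) x = dC (n + 1) (h (n + 1) x) + h n (dP n x) := by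
  obtain ⟨h₀, hh₀, hdh₀⟩ := hC.exists_lift_zero hεC (hdC 0) (hPproj 0) (hD 0) hεD
  obtain ⟨h₁, hh₁, hdh₁⟩ :=
    hC.exists_lift_succ hdC (hPproj 1) 0 ((hD 1).sub (hh₀.comp (hdP 0)))
      fun x => by simp [hdD, hdh₀]
  obtain ⟨h, rfl, hh⟩ := exists_seq_of_forall_exists_step
    (fun n (a : P n →ₗ[R] C (n + 1)) (b : P (n + 1) →ₗ[R] C (n + 2)) =>
      IsEquivariant G a ∧ IsEquivariant G b ∧ ∀ x, dC (n + 1) (b x) = D (n + 1) x - a (dP n x))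
    ⟨hh₀, hh₁, hdh₁⟩ fun n a b ⟨_, hb, hdb⟩ => by
      obtain ⟨c, hc, hdc⟩ := hC.exists_lift_succ hdC (hPproj (n + 2)) (n + 1)
        ((hD (n + 2)).sub (hb.comp (hdP (n + 1)))) fun x => by simp [hdD, hdb, hdPsq]
      exact ⟨c, hb, hc, hdc⟩
  exact ⟨h, fun n => (hh n).1, fun x => (hdh₀ x).symm,
    fun n x => by rw [(hh n).2.2, sub_add_cancel]⟩

end FundamentalLemma

theorem fundamental_lemma_projective_general (R : Type w) [CommRing R]
    (G : Type u) [Group G] (F : Set (Subgroup G))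
    (V W : Type w)
    [AddCommGroup V] [Module R V] [DistribMulAction G V]
    [AddCommGroup W] [Module R W] [DistribMulAction G W] [SMulCommClass G R W]
    (f : V →ₗ[R] W) (hf : ∀ (g : G) (v : V), f (g • v) = g • f v)
    -- the complex `P_*` of relatively `F`-projective modules, augmented over `V`
    (P : ℕ → Type w)
    [∀ n, AddCommGroup (P n)] [∀ n, Module R (P n)]
    [∀ n, DistribMulAction G (P n)] [∀ n, SMulCommClass G R (P n)]
    (dP : ∀ n, P (n + 1) →ₗ[R] P n) (εP : P 0 →ₗ[R] V)
    (hdPsq : ∀ (n : ℕ) (x : P (n + 2)), dP n (dP (n + 1) x) = 0)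
    (hεPsq : ∀ x : P 1, εP (dP 0 x) = 0)
    (hdPequiv : ∀ (n : ℕ) (g : G) (x : P (n + 1)), dP n (g • x) = g • dP n x)
    (hεPequiv : ∀ (g : G) (x : P 0), εP (g • x) = g • εP x)
    (hPproj : ∀ n, IsRelativelyProjective R G F (P n))
    -- the `F`-strong resolution `C_* → W`
    (C : ℕ → Type w)
    [∀ n, AddCommGroup (C n)] [∀ n, Module R (C n)]
    [∀ n, DistribMulAction G (C n)] [∀ n, SMulCommClass G R (C n)]
    (dC : ∀ n, C (n + 1) →ₗ[R] C n) (εC : C 0 →ₗ[R] W)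
    (hdCequiv : ∀ (n : ℕ) (g : G) (x : C (n + 1)), dC n (g • x) = g • dC n x)
    (hεCequiv : ∀ (g : G) (x : C 0), εC (g • x) = g • εC x)
    (hstrong : ∀ H ∈ F, ∃ (k : ∀ n, C n →ₗ[R] C (n + 1)) (km : W →ₗ[R] C 0),
      (∀ (n : ℕ) (h : G), h ∈ H → ∀ x, k n (h • x) = h • k n x) ∧
      (∀ h : G, h ∈ H → ∀ w, km (h • w) = h • km w) ∧
      (∀ w, εC (km w) = w) ∧
      (∀ x : C 0, dC 0 (k 0 x) + km (εC x) = x) ∧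
      ∀ (n : ℕ) (x : C (n + 1)), dC (n + 1) (k (n + 1) x) + k n (dC n x) = x) :
    -- existence of a `G`-equivariant chain map extending `f`
    (∃ fs : ∀ n, P n →ₗ[R] C n,
      (∀ (n : ℕ) (g : G) (x : P n), fs n (g • x) = g • fs n x) ∧
      (∀ x : P 0, εC (fs 0 x) = f (εP x)) ∧
      ∀ (n : ℕ) (x : P (n + 1)), dC n (fs (n + 1) x) = fs n (dP n x)) ∧
    -- uniqueness up to `G`-equivariant chain homotopy
    ∀ fs fs' : ∀ n, P n →ₗ[R] C n,
      ((∀ (n : ℕ) (g : G) (x : P n), fs n (g • x) = g • fs n x) ∧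
        (∀ x : P 0, εC (fs 0 x) = f (εP x)) ∧
        ∀ (n : ℕ) (x : P (n + 1)), dC n (fs (n + 1) x) = fs n (dP n x)) →
      ((∀ (n : ℕ) (g : G) (x : P n), fs' n (g • x) = g • fs' n x) ∧
        (∀ x : P 0, εC (fs' 0 x) = f (εP x)) ∧
        ∀ (n : ℕ) (x : P (n + 1)), dC n (fs' (n + 1) x) = fs' n (dP n x)) →
      ∃ h : ∀ n, P n →ₗ[R] C (n + 1),
        (∀ (n : ℕ) (g : G) (x : P n), h n (g • x) = g • h n x) ∧
        (∀ x : P 0, fs 0 x - fs' 0 x = dC 0 (h 0 x)) ∧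
        ∀ (n : ℕ) (x : P (n + 1)),
          fs (n + 1) x - fs' (n + 1) x = dC (n + 1) (h (n + 1) x) + h n (dP n x) := by
  refine ⟨exists_equivariant_chain_map hPproj hdPequiv hεPequiv hdPsq hεPsq hstrong hdCequiv
    hεCequiv hf, ?_⟩
  rintro fs fs' ⟨hfs, hεfs, hdfs⟩ ⟨hfs', hεfs', hdfs'⟩
  exact exists_equivariant_nullhomotopy (D := fun n => fs n - fs' n) hPproj hdPequiv hdPsq
    hstrong hdCequiv hεCequiv (fun n => IsEquivariant.sub (hfs n) (hfs' n))
    (fun x => by simp [hεfs, hεfs']) (fun n x => by simp [hdfs, hdfs'])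

/-- fundamental lemma, projective side.  Given a `G`-equivariant
map `f : V → W`, a nonnegatively graded complex `P_*` of relatively `F`-projective
`RG`-modules augmented over `V`, and an `F`-strong resolution `C_* → W`, there is a
`G`-equivariant chain map `P_* → C_*` extending `f`, unique up to `G`-equivariant
chain homotopy. -/
theorem fundamental_lemma_projective (R : Type w) [CommRing R]
    (G : Type u) [Group G] (F : Set (Subgroup G)) (hF : IsFamily F)
    (V W : Type w)
    [AddCommGroup V] [Module R V] [DistribMulAction G V] [SMulCommClass G R V]
    [AddCommGroup W] [Module R W] [DistribMulAction G W] [SMulCommClass G R W]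
    (f : V →ₗ[R] W) (hf : ∀ (g : G) (v : V), f (g • v) = g • f v)
    -- the complex `P_*` of relatively `F`-projective modules, augmented over `V`
    (P : ℕ → Type w)
    [∀ n, AddCommGroup (P n)] [∀ n, Module R (P n)]
    [∀ n, DistribMulAction G (P n)] [∀ n, SMulCommClass G R (P n)]
    (dP : ∀ n, P (n + 1) →ₗ[R] P n) (εP : P 0 →ₗ[R] V)
    (hdPsq : ∀ (n : ℕ) (x : P (n + 2)), dP n (dP (n + 1) x) = 0)
    (hεPsq : ∀ x : P 1, εP (dP 0 x) = 0)
    (hdPequiv : ∀ (n : ℕ) (g : G) (x : P (n + 1)), dP n (g • x) = g • dP n x)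
    (hεPequiv : ∀ (g : G) (x : P 0), εP (g • x) = g • εP x)
    (hPproj : ∀ n, IsRelativelyProjective R G F (P n))
    -- the `F`-strong resolution `C_* → W`
    (C : ℕ → Type w)
    [∀ n, AddCommGroup (C n)] [∀ n, Module R (C n)]
    [∀ n, DistribMulAction G (C n)] [∀ n, SMulCommClass G R (C n)]
    (dC : ∀ n, C (n + 1) →ₗ[R] C n) (εC : C 0 →ₗ[R] W)
    (hdCsq : ∀ (n : ℕ) (x : C (n + 2)), dC n (dC (n + 1) x) = 0)
    (hεCsq : ∀ x : C 1, εC (dC 0 x) = 0)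
    (hdCequiv : ∀ (n : ℕ) (g : G) (x : C (n + 1)), dC n (g • x) = g • dC n x)
    (hεCequiv : ∀ (g : G) (x : C 0), εC (g • x) = g • εC x)
    (hsurj : Function.Surjective εC)
    (hexact0 : Function.Exact (dC 0) εC)
    (hexact : ∀ n, Function.Exact (dC (n + 1)) (dC n))
    (hstrong : ∀ H ∈ F, ∃ (k : ∀ n, C n →ₗ[R] C (n + 1)) (km : W →ₗ[R] C 0),
      (∀ (n : ℕ) (h : G), h ∈ H → ∀ x, k n (h • x) = h • k n x) ∧
      (∀ h : G, h ∈ H → ∀ w, km (h • w) = h • km w) ∧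
      (∀ w, εC (km w) = w) ∧
      (∀ x : C 0, dC 0 (k 0 x) + km (εC x) = x) ∧
      ∀ (n : ℕ) (x : C (n + 1)), dC (n + 1) (k (n + 1) x) + k n (dC n x) = x) :
    -- existence of a `G`-equivariant chain map extending `f`
    (∃ fs : ∀ n, P n →ₗ[R] C n,
      (∀ (n : ℕ) (g : G) (x : P n), fs n (g • x) = g • fs n x) ∧
      (∀ x : P 0, εC (fs 0 x) = f (εP x)) ∧
      ∀ (n : ℕ) (x : P (n + 1)), dC n (fs (n + 1) x) = fs n (dP n x)) ∧
    -- uniqueness up to `G`-equivariant chain homotopy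
    ∀ fs fs' : ∀ n, P n →ₗ[R] C n,
      ((∀ (n : ℕ) (g : G) (x : P n), fs n (g • x) = g • fs n x) ∧
        (∀ x : P 0, εC (fs 0 x) = f (εP x)) ∧
        ∀ (n : ℕ) (x : P (n + 1)), dC n (fs (n + 1) x) = fs n (dP n x)) →
      ((∀ (n : ℕ) (g : G) (x : P n), fs' n (g • x) = g • fs' n x) ∧
        (∀ x : P 0, εC (fs' 0 x) = f (εP x)) ∧
        ∀ (n : ℕ) (x : P (n + 1)), dC n (fs' (n + 1) x) = fs' n (dP n x)) →
      ∃ h : ∀ n, P n →ₗ[R] C (n + 1),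
        (∀ (n : ℕ) (g : G) (x : P n), h n (g • x) = g • h n x) ∧
        (∀ x : P 0, fs 0 x - fs' 0 x = dC 0 (h 0 x)) ∧
        ∀ (n : ℕ) (x : P (n + 1)),
          fs (n + 1) x - fs' (n + 1) x = dC (n + 1) (h (n + 1) x) + h n (dP n x) :=
  fundamental_lemma_projective_general R G F V W f hf P dP εP hdPsq hεPsq hdPequiv hεPequiv hPproj C
    dC εC hdCequiv hεCequiv hstrong

end Statement6

end RelBdd
end

section
/- Let G be a group and ℋ a set of subgroups of G. Then G is amenable relative to ℋ if and only if there exists a nonzero bounded linear functional μ on ℓ∞(G/ℋ) that is G-invariant, i.e. μ(g·f) = μ(f) for all g ∈ G and f ∈ ℓ∞(G/ℋ), where (g·f)(s) = f(g⁻¹·s). -/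
open scoped BigOperators

universe u v w

namespace RelBdd

variable {G : Type u} [Group G]

/-!
Positivity bounds an invariant mean: `|m f| ≤ m 1 * B` whenever `|f| ≤ B`. Conversely, a bounded
functional `μ` on `ℓ∞(S)` is order bounded, so `f ↦ sup {μ h | 0 ≤ h ≤ f}` is finite on the positive
cone. The Riesz decomposition `[0, f + g] = [0, f] + [0, g]` makes it additive there, so it extends
to a positive linear functional `μ⁺ ≥ μ`, invariant whenever `μ` is since the action permutes order
intervals. Thus `μ = μ⁺ - (μ⁺ - μ)` is a difference of two positive invariant functionals, one of
which is nonzero; it is positive at the constant `1` (which dominates every `f` up to scaling), and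
normalising it there gives an invariant mean.
-/

open scoped Pointwise

section LatticeOrderedGroup

variable {E : Type*} [AddCommGroup E] [Lattice E] [IsOrderedAddMonoid E]

lemma Icc_zero_add {f g : E} (hf : 0 ≤ f) (hg : 0 ≤ g) :
    Set.Icc 0 (f + g) = Set.Icc 0 f + Set.Icc 0 g := by
  ext h
  constructor
  · rintro ⟨h0, hle⟩
    refine ⟨h ⊓ f, ⟨le_inf h0 hf, inf_le_right⟩, h - h ⊓ f, ⟨sub_nonneg.2 inf_le_left, ?_⟩,
      add_sub_cancel _ _⟩
    rw [sub_inf, sub_self]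
    exact sup_le hg (sub_le_iff_le_add'.2 hle)
  · rintro ⟨a, ⟨ha0, haf⟩, b, ⟨hb0, hbg⟩, rfl⟩
    exact ⟨add_nonneg ha0 hb0, add_le_add haf hbg⟩

end LatticeOrderedGroup

section RieszSpace

variable {E : Type*} [AddCommGroup E] [Lattice E] [Module ℝ E]

lemma smul_posPart [PosSMulMono ℝ E] {c : ℝ} (hc : 0 ≤ c) (f : E) : c • f⁺ = (c • f)⁺ := by
  rcases hc.eq_or_lt with rfl | hc
  · simp
  · have h := (OrderIso.smulRight (β := E) hc).map_sup f 0
    simp only [OrderIso.smulRight_apply, smul_zero] at h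
    exact h

lemma smul_negPart [PosSMulMono ℝ E] {c : ℝ} (hc : 0 ≤ c) (f : E) : c • f⁻ = (c • f)⁻ := by
  rw [← posPart_neg, smul_posPart hc, smul_neg, posPart_neg]

noncomputable def supIcc (μ : E →ₗ[ℝ] ℝ) (f : E) : ℝ :=
  sSup (μ '' Set.Icc 0 f)

lemma supIcc_smul [PosSMulMono ℝ E] (μ : E →ₗ[ℝ] ℝ) {c : ℝ} (hc : 0 ≤ c) (f : E) :
    supIcc μ (c • f) = c * supIcc μ f := by
  rcases hc.eq_or_lt with rfl | hc
  · simp [supIcc]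
  · have hIcc : Set.Icc 0 (c • f) = c • Set.Icc 0 f := by
      rw [← Set.image_smul]
      simpa using ((OrderIso.smulRight hc).image_Icc 0 f).symm
    rw [supIcc, hIcc, image_smul_set, Real.sSup_smul_of_nonneg hc.le, smul_eq_mul, supIcc]

variable [IsOrderedAddMonoid E]

lemma supIcc_add {μ : E →ₗ[ℝ] ℝ} (hμ : ∀ f, BddAbove (μ '' Set.Icc 0 f)) {f g : E}
    (hf : 0 ≤ f) (hg : 0 ≤ g) : supIcc μ (f + g) = supIcc μ f + supIcc μ g := by
  rw [supIcc, Icc_zero_add hf hg, Set.image_add,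
    csSup_add ((Set.nonempty_Icc.2 hf).image μ) (hμ f) ((Set.nonempty_Icc.2 hg).image μ) (hμ g)]
  rfl

variable [PosSMulMono ℝ E]

def linearOfPosCone (σ : E → ℝ)
    (hadd : ∀ ⦃f g : E⦄, 0 ≤ f → 0 ≤ g → σ (f + g) = σ f + σ g)
    (hsmul : ∀ ⦃c : ℝ⦄, 0 ≤ c → ∀ ⦃f : E⦄, 0 ≤ f → σ (c • f) = c * σ f) :
    E →ₗ[ℝ] ℝ :=
  have map_add (f g : E) : σ (f + g)⁺ - σ (f + g)⁻ = σ f⁺ - σ f⁻ + (σ g⁺ - σ g⁻) := by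
    have hparts : (f + g)⁺ + (f⁻ + g⁻) = (f⁺ + g⁺) + (f + g)⁻ :=
      sub_eq_sub_iff_add_eq_add.1 <| by
        rw [posPart_sub_negPart, add_sub_add_comm, posPart_sub_negPart, posPart_sub_negPart]
    have h := congrArg σ hparts
    simp only [hadd, posPart_nonneg, negPart_nonneg, add_nonneg] at h
    linarith
  have map_nonneg_smul (c : ℝ) (hc : 0 ≤ c) (f : E) :
      σ (c • f)⁺ - σ (c • f)⁻ = c * (σ f⁺ - σ f⁻) := by
    rw [← smul_posPart hc, ← smul_negPart hc, hsmul hc (posPart_nonneg f),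
      hsmul hc (negPart_nonneg f), mul_sub]
  have map_neg (f : E) : σ (-f)⁺ - σ (-f)⁻ = -(σ f⁺ - σ f⁻) := by
    rw [posPart_neg, negPart_neg, neg_sub]
  { toFun f := σ f⁺ - σ f⁻
    map_add' := map_add
    map_smul' c f := by
      rcases le_total 0 c with hc | hc
      · exact map_nonneg_smul c hc f
      · have := map_nonneg_smul (-c) (neg_nonneg.2 hc) f
        rw [neg_smul, map_neg] at this
        simp only [smul_eq_mul, RingHom.id_apply]
        linarith }

lemma linearOfPosCone_apply_of_nonneg {σ : E → ℝ}
    (hadd : ∀ ⦃f g : E⦄, 0 ≤ f → 0 ≤ g → σ (f + g) = σ f + σ g)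
    (hsmul : ∀ ⦃c : ℝ⦄, 0 ≤ c → ∀ ⦃f : E⦄, 0 ≤ f → σ (c • f) = c * σ f)
    {f : E} (hf : 0 ≤ f) : linearOfPosCone σ hadd hsmul f = σ f := by
  have hσ0 : σ 0 = σ 0 + σ 0 := by simpa using hadd le_rfl le_rfl
  change σ f⁺ - σ f⁻ = σ f
  rw [posPart_eq_self.2 hf, negPart_eq_zero.2 hf]
  linarith

variable {μ : E →ₗ[ℝ] ℝ} (hμ : ∀ f, BddAbove (μ '' Set.Icc 0 f))

noncomputable def positivePart : E →ₗ[ℝ] ℝ :=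
  linearOfPosCone (supIcc μ) (fun _ _ hf hg => supIcc_add hμ hf hg)
    (fun _ hc f _ => supIcc_smul μ hc f)

lemma positivePart_apply_of_nonneg {f : E} (hf : 0 ≤ f) : positivePart hμ f = supIcc μ f :=
  linearOfPosCone_apply_of_nonneg _ _ hf

lemma positivePart_nonneg {f : E} (hf : 0 ≤ f) : 0 ≤ positivePart hμ f := by
  rw [positivePart_apply_of_nonneg hμ hf]
  exact le_csSup (hμ f) ⟨0, ⟨le_rfl, hf⟩, map_zero μ⟩

lemma le_positivePart {f : E} (hf : 0 ≤ f) : μ f ≤ positivePart hμ f := by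
  rw [positivePart_apply_of_nonneg hμ hf]
  exact le_csSup (hμ f) ⟨f, ⟨hf, le_rfl⟩, rfl⟩

lemma positivePart_apply_map (T : E ≃+o E) (hT : ∀ f, μ (T f) = μ f) (f : E) :
    positivePart hμ (T f) = positivePart hμ f := by
  have hcone {f : E} (hf : 0 ≤ f) : positivePart hμ (T f) = positivePart hμ f := by
    have hIcc : Set.Icc 0 (T f) = T '' Set.Icc 0 f := by
      conv_lhs => rw [← map_zero T]
      exact (T.toOrderIso.image_Icc 0 f).symm
    rw [positivePart_apply_of_nonneg hμ (map_nonneg T hf), positivePart_apply_of_nonneg hμ hf,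
      supIcc, supIcc, hIcc, Set.image_image]
    simp only [hT]
  rw [← posPart_sub_negPart f, map_sub, map_sub, map_sub, hcone (posPart_nonneg f),
    hcone (negPart_nonneg f)]

end RieszSpace

section BoundedFunctions

variable {S : Type v}

instance : Lattice (Linf S) :=
  Subtype.lattice
    (fun _ _ ⟨C, hC⟩ ⟨D, hD⟩ =>
      ⟨max C D, fun s => abs_max_le_max_abs_abs.trans (max_le_max (hC s) (hD s))⟩)
    (fun _ _ ⟨C, hC⟩ ⟨D, hD⟩ =>
      ⟨max C D, fun s => abs_min_le_max_abs_abs.trans (max_le_max (hC s) (hD s))⟩)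

instance : PosSMulMono ℝ (Linf S) :=
  ⟨fun _ hc _ _ hfg s => mul_le_mul_of_nonneg_left (hfg s) hc⟩

@[simp]
lemma coe_compL (φ : S → S) (f : Linf S) : (compL φ f : S → ℝ) = fun s => (f : S → ℝ) (φ s) :=
  rfl

def compLIso (φ : S ≃ S) : Linf S ≃+o Linf S where
  toFun := compL φ
  invFun := compL φ.symm
  left_inv f := Subtype.ext <| funext fun s => congrArg f.1 (φ.apply_symm_apply s)
  right_inv f := Subtype.ext <| funext fun s => congrArg f.1 (φ.symm_apply_apply s)
  map_add' := map_add (compL φ)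
  map_le_map_iff' {f g} :=
    ⟨fun h s => by simpa using h (φ.symm s), fun h s => h (φ s)⟩

lemma bddAbove_image_Icc_of_bounded {μ : Linf S →ₗ[ℝ] ℝ} {C : ℝ}
    (hC : ∀ (f : Linf S) (B : ℝ), (∀ s, |(f : S → ℝ) s| ≤ B) → |μ f| ≤ C * B) (f : Linf S) :
    BddAbove (μ '' Set.Icc 0 f) := by
  obtain ⟨B, hB⟩ := f.2
  refine ⟨C * B, ?_⟩
  rintro _ ⟨h, ⟨h0, hf⟩, rfl⟩
  refine (le_abs_self _).trans (hC h B fun s => ?_)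
  rw [abs_of_nonneg (h0 s)]
  exact (hf s).trans ((le_abs_self _).trans (hB s))

lemma abs_apply_le_of_nonneg {m : Linf S →ₗ[ℝ] ℝ} (hm : ∀ f, 0 ≤ f → 0 ≤ m f)
    {f : Linf S} {B : ℝ} (hB : ∀ s, |(f : S → ℝ) s| ≤ B) : |m f| ≤ m (constLinf S 1) * B := by
  have hlower := hm (B • constLinf S 1 + f) fun s => by
    show 0 ≤ B * 1 + (f : S → ℝ) s
    linarith [(abs_le.1 (hB s)).1]
  have hupper := hm (B • constLinf S 1 - f) fun s => by
    show 0 ≤ B * 1 - (f : S → ℝ) s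
    linarith [(abs_le.1 (hB s)).2]
  rw [map_add, map_smul, smul_eq_mul] at hlower
  rw [map_sub, map_smul, smul_eq_mul] at hupper
  rw [abs_le]
  constructor <;> linarith

lemma invariantMean_of_nonneg_of_ne_zero {K : Type u} [Group K] [MulAction K S]
    (ν : Linf S →ₗ[ℝ] ℝ) (hpos : ∀ f, 0 ≤ f → 0 ≤ ν f) (hne : ν ≠ 0)
    (hinv : ∀ (g : K) (f : Linf S), ν (compL (fun s => g⁻¹ • s) f) = ν f) :
    InvariantMean K S := by
  have hone : 0 < ν (constLinf S 1) := by
    refine (hpos _ fun _ => zero_le_one).lt_of_ne' fun h0 => hne (LinearMap.ext fun f => ?_)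
    obtain ⟨B, hB⟩ := f.2
    simpa [h0] using abs_apply_le_of_nonneg hpos hB
  refine ⟨(ν (constLinf S 1))⁻¹ • ν, by simp [hone.ne'], fun f hf => ?_, fun g f => by simp [hinv]⟩
  exact mul_nonneg (inv_nonneg.2 hone.le) (hpos f hf)

end BoundedFunctions

/-- A group `G` is amenable relative to a set `ℋ` of subgroups if
and only if there exists a nonzero `G`-invariant bounded linear functional on
`ℓ∞(G/ℋ)`. -/
theorem relatively_amenable_iff_invariant_functional (G : Type u) [Group G]
    (ℋ : Set (Subgroup G)) :
    InvariantMean G (Cos G ℋ) ↔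
      ∃ μ : Linf (Cos G ℋ) →ₗ[ℝ] ℝ,
        (∃ C : ℝ, ∀ (f : Linf (Cos G ℋ)) (B : ℝ),
          (∀ s, |(f : Cos G ℋ → ℝ) s| ≤ B) → |μ f| ≤ C * B) ∧
        μ ≠ 0 ∧
        ∀ (g : G) (f : Linf (Cos G ℋ)), μ (compL (fun s => g⁻¹ • s) f) = μ f := by
  constructor
  · rintro ⟨m, hm1, hmpos, hminv⟩
    refine ⟨m, ⟨1, fun f B hB => ?_⟩, fun h => by simp [h] at hm1, hminv⟩
    simpa [hm1] using abs_apply_le_of_nonneg hmpos hB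
  · rintro ⟨μ, ⟨C, hC⟩, hμ0, hμinv⟩
    have hμ := bddAbove_image_Icc_of_bounded hC
    have hinv (g : G) (f : Linf (Cos G ℋ)) :
        positivePart hμ (compL (fun s => g⁻¹ • s) f) = positivePart hμ f :=
      positivePart_apply_map hμ (compLIso (MulAction.toPerm g⁻¹)) (hμinv g ·) f
    by_cases h : positivePart hμ = 0
    · exact invariantMean_of_nonneg_of_ne_zero (positivePart hμ - μ)
        (fun f hf => sub_nonneg.2 (le_positivePart hμ hf)) (by simpa [h] using hμ0)
        (fun g f => by simp [hinv, hμinv])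
    · exact invariantMean_of_nonneg_of_ne_zero _ (fun f hf => positivePart_nonneg hμ hf) h hinv

end RelBdd
end

section
/- Let G be a group, F a family of subgroups of G, W a normed ℝG-module with dual W^#, and S a G-set such that every point stabilizer G_s is amenable relative to the family F|_{G_s} = {L ∩ G_s : L ∈ F} (i.e. the G_s-set ⨿_{L∈F|_{G_s}} G_s/L admits a G_s-invariant mean). Then for every n ≥ 0 the normed ℝG-module B(S^{n+1}, W^#) of bounded functions S^{n+1} → W^# with sup norm and action (g·f)(x) = g·f(g⁻¹·x) is relatively F-injective. -/
/-!
For `H ∈ F` the strong injectivity of `i` gives an `H`-equivariant retraction `σ_H` of `i`, so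
`ψ ∘ σ_H` is an `H`-equivariant extension of `ψ`, and its conjugate by `g` is a
`gHg⁻¹`-equivariant extension depending only on the coset `gH`. To define `Ψ b x`, write
`x 0 = γ • s` with `s` a chosen orbit representative, conjugate the extension of each coset `qL`
of `G_s` (`L ∈ F|_{G_s}`) by `γ q`, and average the values at `b` and `x` with a `G_s`-invariant
mean on `⨿ G_s/L`. These extensions are uniformly bounded, so the average is a bounded
functional; each of them restricts to `ψ`, hence so does the average; and another choice of
`γ` only translates the coset index by an element of `G_s`, so invariance of the mean gives
`G`-equivariance.
-/

open scoped BigOperators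

universe u v w

namespace RelBdd

variable {G : Type u} [Group G]

open MulAction

lemma smulCLM_apply {W : Type*} [NormedAddCommGroup W] [NormedSpace ℝ W] [DistribMulAction G W]
    [SMulCommClass G ℝ W] (hW : ∀ (g : G) (w : W), ‖g • w‖ = ‖w‖) (g : G) (w : W) :
    smulCLM hW g w = g • w := rfl

lemma norm_smulCLM_le {W : Type*} [NormedAddCommGroup W] [NormedSpace ℝ W]
    [DistribMulAction G W] [SMulCommClass G ℝ W] (hW : ∀ (g : G) (w : W), ‖g • w‖ = ‖w‖)
    (g : G) : ‖smulCLM hW g‖ ≤ 1 :=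
  LinearMap.mkContinuous_norm_le _ zero_le_one _

section Mean

variable {T : Type*}

structure IsMean (m : Linf T →ₗ[ℝ] ℝ) : Prop where
  map_one : m (constLinf T 1) = 1
  nonneg : ∀ f : Linf T, (∀ t, 0 ≤ (f : T → ℝ) t) → 0 ≤ m f

namespace IsMean

variable {m : Linf T →ₗ[ℝ] ℝ}

lemma map_constLinf (hm : IsMean m) (r : ℝ) : m (constLinf T r) = r := by
  have : constLinf T r = r • constLinf T 1 := Subtype.ext (funext fun _ => (mul_one r).symm)
  rw [this, map_smul, hm.map_one, smul_eq_mul, mul_one]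

lemma abs_le (hm : IsMean m) {f : Linf T} {c : ℝ} (hf : ∀ t, |(f : T → ℝ) t| ≤ c) :
    |m f| ≤ c := by
  have upper := hm.nonneg (constLinf T c - f) fun t => sub_nonneg.2 (_root_.abs_le.1 (hf t)).2
  have lower := hm.nonneg (constLinf T c + f) fun t =>
    show 0 ≤ c + (f : T → ℝ) t by linarith [(_root_.abs_le.1 (hf t)).1]
  rw [map_sub, hm.map_constLinf] at upper
  rw [map_add, hm.map_constLinf] at lower
  exact _root_.abs_le.2 ⟨by linarith, by linarith⟩

end IsMean

variable {E V : Type*} [NormedAddCommGroup E] [NormedSpace ℝ E]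
  [NormedAddCommGroup V] [NormedSpace ℝ V]

lemma abs_apply_apply_le {Φ : T → E →ₗ[ℝ] V →L[ℝ] ℝ} {C : ℝ} (hΦ : ∀ t e, ‖Φ t e‖ ≤ C * ‖e‖)
    (t : T) (e : E) (v : V) :
    |Φ t e v| ≤ C * ‖e‖ * ‖v‖ :=
  ((Φ t e).le_opNorm v).trans (mul_le_mul_of_nonneg_right (hΦ t e) (norm_nonneg v))

def evalLinf {Φ : T → E →ₗ[ℝ] V →L[ℝ] ℝ} {C : ℝ} (hΦ : ∀ t e, ‖Φ t e‖ ≤ C * ‖e‖)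
    (e : E) (v : V) : Linf T :=
  ⟨fun t => Φ t e v, C * ‖e‖ * ‖v‖, fun t => abs_apply_apply_le hΦ t e v⟩

noncomputable def meanOp {m : Linf T →ₗ[ℝ] ℝ} (hm : IsMean m) (Φ : T → E →ₗ[ℝ] V →L[ℝ] ℝ)
    (C : ℝ) (hΦ : ∀ t e, ‖Φ t e‖ ≤ C * ‖e‖) : E →L[ℝ] V →L[ℝ] ℝ :=
  LinearMap.mkContinuous₂
    (LinearMap.mk₂ ℝ (fun e v => m (evalLinf hΦ e v))
      (fun e e' v => by rw [← map_add]; congr 1; ext t; simp [evalLinf])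
      (fun r e v => by rw [← map_smul]; congr 1; ext t; simp [evalLinf])
      (fun e v v' => by rw [← map_add]; congr 1; ext t; simp [evalLinf])
      (fun r e v => by rw [← map_smul]; congr 1; ext t; simp [evalLinf]))
    C fun e v => hm.abs_le fun t => abs_apply_apply_le hΦ t e v

variable {Φ : T → E →ₗ[ℝ] V →L[ℝ] ℝ} {C : ℝ} {m : Linf T →ₗ[ℝ] ℝ} (hm : IsMean m)
  (hΦ : ∀ t e, ‖Φ t e‖ ≤ C * ‖e‖)

lemma norm_meanOp_le (hC : 0 ≤ C) : ‖meanOp hm Φ C hΦ‖ ≤ C :=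
  LinearMap.mkContinuous₂_norm_le _ hC _

lemma meanOp_apply_of_forall_eq {e : E} {θ : V →L[ℝ] ℝ} (h : ∀ t, Φ t e = θ) :
    meanOp hm Φ C hΦ e = θ := by
  ext v
  have : evalLinf hΦ e v = constLinf T (θ v) := Subtype.ext (funext fun t => by
    simp [evalLinf, constLinf, h])
  exact (congrArg m this).trans (hm.map_constLinf _)

lemma meanOp_apply_eq_comp {Γ : Type*} [Group Γ] [MulAction Γ T]
    (hinv : ∀ (γ : Γ) (f : Linf T), m (compL (fun t => γ⁻¹ • t) f) = m f)
    {Φ' : T → E →ₗ[ℝ] V →L[ℝ] ℝ} {C' : ℝ} (hΦ' : ∀ t e, ‖Φ' t e‖ ≤ C' * ‖e‖)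
    (γ : Γ) {e e' : E} (u : V →L[ℝ] V) (h : ∀ t, Φ t e = (Φ' (γ • t) e').comp u) :
    meanOp hm Φ C hΦ e = (meanOp hm Φ' C' hΦ' e').comp u := by
  ext v
  have : evalLinf hΦ e v = compL (fun t => γ⁻¹⁻¹ • t) (evalLinf hΦ' e' (u v)) :=
    Subtype.ext (funext fun t => by simp [evalLinf, compL, h])
  exact (congrArg m this).trans (hinv γ⁻¹ _)

end Mean

section Conjugation

variable {X : Type*} [MulAction G X]
  {W : Type*} [NormedAddCommGroup W] [NormedSpace ℝ W] [DistribMulAction G W]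
  [SMulCommClass G ℝ W] (hW : ∀ (g : G) (w : W), ‖g • w‖ = ‖w‖)
  {M N : Type*} [AddCommGroup M] [Module ℝ M] [DistribMulAction G M] [SMulCommClass G ℝ M]
  [AddCommGroup N] [Module ℝ N] [DistribMulAction G N] [SMulCommClass G ℝ N]

def conjSMul (g : G) (Θ : N →ₗ[ℝ] X → W →L[ℝ] ℝ) : N →ₗ[ℝ] X → W →L[ℝ] ℝ where
  toFun b x := (Θ (g⁻¹ • b) (g⁻¹ • x)).comp (smulCLM hW g⁻¹)
  map_add' b b' := by ext x w; simp [smul_add]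
  map_smul' r b := by ext x w; simp [smul_comm g⁻¹ r b]

variable {Θ : N →ₗ[ℝ] X → W →L[ℝ] ℝ}

@[simp]
lemma conjSMul_apply (g : G) (b : N) (x : X) :
    conjSMul hW g Θ b x = (Θ (g⁻¹ • b) (g⁻¹ • x)).comp (smulCLM hW g⁻¹) := rfl

lemma conjSMul_mul (g h : G) : conjSMul hW (g * h) Θ = conjSMul hW g (conjSMul hW h Θ) := by
  ext b x w
  simp [mul_smul, smulCLM_apply]

lemma conjSMul_smul_apply (g : G) (b : N) (x : X) :
    conjSMul hW g Θ (g • b) x = (Θ b (g⁻¹ • x)).comp (smulCLM hW g⁻¹) := by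
  simp

lemma conjSMul_eq_self {g : G}
    (hΘ : ∀ b x, Θ (g • b) x = (Θ b (g⁻¹ • x)).comp (smulCLM hW g⁻¹)) :
    conjSMul hW g Θ = Θ := by
  ext b x : 2
  conv_rhs => rw [← smul_inv_smul g b, hΘ]
  rfl

lemma conjSMul_comp {g : G} (α : M →ₗ[ℝ] N) (hα : ∀ b, α (g⁻¹ • b) = g⁻¹ • α b) :
    conjSMul hW g (Θ ∘ₗ α) = conjSMul hW g Θ ∘ₗ α := by
  ext b x w
  simp [hα]

lemma norm_conjSMul_apply_le {B : Type*} [NormedAddCommGroup B] [NormedSpace ℝ B]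
    [DistribMulAction G B] [SMulCommClass G ℝ B] (hB : ∀ (g : G) (b : B), ‖g • b‖ = ‖b‖)
    {Θ : B →ₗ[ℝ] X → W →L[ℝ] ℝ} {C : ℝ} (hΘ : ∀ b x, ‖Θ b x‖ ≤ C * ‖b‖) (g : G) (b : B) (x : X) :
    ‖conjSMul hW g Θ b x‖ ≤ C * ‖b‖ :=
  calc ‖conjSMul hW g Θ b x‖ ≤ ‖Θ (g⁻¹ • b) (g⁻¹ • x)‖ * ‖smulCLM hW g⁻¹‖ :=
        ContinuousLinearMap.opNorm_comp_le _ _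
    _ ≤ ‖Θ (g⁻¹ • b) (g⁻¹ • x)‖ :=
        mul_le_of_le_one_right (norm_nonneg _) (norm_smulCLM_le hW _)
    _ ≤ C * ‖b‖ := (hΘ _ _).trans_eq (by rw [hB])

end Conjugation

lemma apply_mul_out_smul {β : Type*} {K : Subgroup G} {L : Subgroup K} {f : G → β}
    (hf : ∀ (g : G) (l : K), l ∈ L → f (g * l) = f g) (g : G) (c : K) (q : K ⧸ L) :
    f (g * ↑(c • q).out) = f (g * c * ↑q.out) := by
  have hl : (c * q.out)⁻¹ * (c • q).out ∈ L := by
    rw [← QuotientGroup.eq, QuotientGroup.out_eq', ← smul_eq_mul]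
    exact MulAction.Quotient.mk_smul_out L c q
  have := hf (g * ↑(c * q.out)) _ hl
  rwa [mul_assoc, ← Subgroup.coe_mul, mul_inv_cancel_left, Subgroup.coe_mul, ← mul_assoc] at this

section Ambient

variable {F : Set (Subgroup G)} {H : Subgroup G}

noncomputable def ambientSubgroup (L : restrictedFamily F H) : Subgroup G :=
  Classical.choose L.2

lemma ambientSubgroup_mem (L : restrictedFamily F H) : ambientSubgroup L ∈ F :=
  (Classical.choose_spec L.2).1

lemma coe_mem_ambientSubgroup {L : restrictedFamily F H} {l : H} (hl : l ∈ (L : Subgroup H)) :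
    (l : G) ∈ ambientSubgroup L := by
  rw [(Classical.choose_spec L.2).2] at hl
  exact Subgroup.mem_subgroupOf.1 hl

end Ambient

section OrbitRep

variable {S : Type*} [MulAction G S]

variable (G) in
noncomputable def orbitRep (s : S) : S :=
  (Quotient.mk (orbitRel G S) s).out

lemma orbitRep_smul (g : G) (s : S) : orbitRep G (g • s) = orbitRep G s :=
  congrArg Quotient.out (Quotient.sound (mem_orbit s g))

lemma exists_smul_orbitRep_eq (s : S) : ∃ g : G, g • orbitRep G s = s := by
  obtain ⟨g, hg⟩ := mem_orbit_iff.1 (orbitRel_apply.1 (Quotient.mk_out (s := orbitRel G S) s))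
  exact ⟨g⁻¹, by rw [orbitRep, ← hg, inv_smul_smul]⟩

end OrbitRep

section AveragedExtension

variable {F : Set (Subgroup G)} {S : Type*} [MulAction G S] {X : Type*} [MulAction G X]
  {W : Type*} [NormedAddCommGroup W] [NormedSpace ℝ W] [DistribMulAction G W]
  [SMulCommClass G ℝ W] (hW : ∀ (g : G) (w : W), ‖g • w‖ = ‖w‖)
  {A : Type*} [NormedAddCommGroup A] [NormedSpace ℝ A]
  {B : Type*} [NormedAddCommGroup B] [NormedSpace ℝ B] [DistribMulAction G B]
  [SMulCommClass G ℝ B] (hB : ∀ (g : G) (b : B), ‖g • b‖ = ‖b‖)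
  (ψ : A →ₗ[ℝ] X → W →L[ℝ] ℝ) (σ : ∀ H ∈ F, B →L[ℝ] A) {C : ℝ}
  (hψσ : ∀ H hH b x, ‖ψ (σ H hH b) x‖ ≤ C * ‖b‖)
  {m : ∀ s : S, Linf (Cos (stabilizer G s) (restrictedFamily F (stabilizer G s))) →ₗ[ℝ] ℝ}
  (hm : ∀ s, IsMean (m s))

-- On the coset `t = q L` of `G_s`: the extension `ψ ∘ σ_L'` (with `L = L' ∩ G_s`, `L' ∈ F`)
-- conjugated by `γ q`.
noncomputable def cosetFamily {s : S} (γ : G) (x : X)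
    (t : Cos (stabilizer G s) (restrictedFamily F (stabilizer G s))) :
    B →ₗ[ℝ] W →L[ℝ] ℝ :=
  LinearMap.proj x ∘ₗ
    conjSMul hW (γ * t.2.out) (ψ ∘ₗ (σ _ (ambientSubgroup_mem t.1)).toLinearMap)

noncomputable def cosetAverage (s : S) (γ : G) (x : X) : B →L[ℝ] W →L[ℝ] ℝ :=
  meanOp (hm s) (cosetFamily hW ψ σ γ x) C fun t b =>
    norm_conjSMul_apply_le hW hB (Θ := ψ ∘ₗ (σ _ (ambientSubgroup_mem t.1)).toLinearMap)
      (hψσ _ _) _ b x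

lemma cosetAverage_map [DistribMulAction G A] [SMulCommClass G ℝ A]
    (hψ : ∀ g, conjSMul hW g ψ = ψ) (i : A →L[ℝ] B)
    (hi : ∀ (g : G) (a : A), i (g • a) = g • i a) (hσi : ∀ H hH a, σ H hH (i a) = a)
    (s : S) (γ : G) (x : X) (a : A) :
    cosetAverage hW hB ψ σ hψσ hm s γ x (i a) = ψ a x :=
  meanOp_apply_of_forall_eq (hm s) _ fun t => by
    have hψσi : (ψ ∘ₗ (σ _ (ambientSubgroup_mem t.1)).toLinearMap) ∘ₗ i.toLinearMap = ψ :=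
      LinearMap.ext fun a => by simp [hσi]
    change (conjSMul hW _ _ ∘ₗ i.toLinearMap) a x = ψ a x
    rw [← conjSMul_comp hW _ (hi _), hψσi, hψ]

lemma cosetAverage_smul [DistribMulAction G A] [SMulCommClass G ℝ A]
    (hminv : ∀ s (c : stabilizer G s) f, m s (compL (fun t => c⁻¹ • t) f) = m s f)
    (hψ : ∀ g, conjSMul hW g ψ = ψ)
    (hσ : ∀ H hH, ∀ h ∈ H, ∀ b, σ H hH (h • b) = h • σ H hH b)
    {s : S} {g γ₁ γ₂ : G} (c : stabilizer G s) (hγ : γ₁ = g * γ₂ * c) (x : X) (b : B) :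
    cosetAverage hW hB ψ σ hψσ hm s γ₁ x (g • b)
      = (cosetAverage hW hB ψ σ hψσ hm s γ₂ (g⁻¹ • x) b).comp (smulCLM hW g⁻¹) := by
  refine meanOp_apply_eq_comp (hm s) _ (hminv s) _ c _ fun ⟨L, q⟩ => ?_
  set Θ := ψ ∘ₗ (σ _ (ambientSubgroup_mem L)).toLinearMap
  have hΘ : ∀ (k : G) (l : stabilizer G s), l ∈ (L : Subgroup _) →
      conjSMul hW (k * l) Θ = conjSMul hW k Θ := fun k l hl => by
    rw [conjSMul_mul, conjSMul_comp hW _ (hσ _ _ _ (inv_mem (coe_mem_ambientSubgroup hl))), hψ]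
  have hout := apply_mul_out_smul (f := fun k => conjSMul hW k Θ) hΘ γ₂ c q
  change conjSMul hW (γ₁ * q.out) Θ (g • b) x
    = (conjSMul hW (γ₂ * (c • q).out) Θ b (g⁻¹ • x)).comp (smulCLM hW g⁻¹)
  rw [hout, hγ, mul_assoc g, mul_assoc g, conjSMul_mul, conjSMul_smul_apply]

noncomputable def averagedExtension (π : X → S) (γ : S → G) : B →ₗ[ℝ] X → W →L[ℝ] ℝ :=
  LinearMap.pi fun x =>
    (cosetAverage hW hB ψ σ hψσ hm (orbitRep G (π x)) (γ (π x)) x).toLinearMap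

lemma norm_averagedExtension_apply_le (hC : 0 ≤ C) (π : X → S) (γ : S → G) (b : B) (x : X) :
    ‖averagedExtension hW hB ψ σ hψσ hm π γ b x‖ ≤ C * ‖b‖ :=
  ContinuousLinearMap.le_of_opNorm_le _ (norm_meanOp_le (hm _) _ hC) b

lemma averagedExtension_map [DistribMulAction G A] [SMulCommClass G ℝ A]
    (hψ : ∀ g, conjSMul hW g ψ = ψ) (i : A →L[ℝ] B)
    (hi : ∀ (g : G) (a : A), i (g • a) = g • i a) (hσi : ∀ H hH a, σ H hH (i a) = a)
    (π : X → S) (γ : S → G) (a : A) :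
    averagedExtension hW hB ψ σ hψσ hm π γ (i a) = ψ a :=
  funext fun x => cosetAverage_map hW hB ψ σ hψσ hm hψ i hi hσi _ _ x a

lemma averagedExtension_smul [DistribMulAction G A] [SMulCommClass G ℝ A]
    (hminv : ∀ s (c : stabilizer G s) f, m s (compL (fun t => c⁻¹ • t) f) = m s f)
    (hψ : ∀ g, conjSMul hW g ψ = ψ)
    (hσ : ∀ H hH, ∀ h ∈ H, ∀ b, σ H hH (h • b) = h • σ H hH b)
    {π : X → S} (hπ : ∀ (g : G) x, π (g • x) = g • π x)
    {γ : S → G} (hγ : ∀ s, γ s • orbitRep G s = s) (g : G) (b : B) (x : X) :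
    averagedExtension hW hB ψ σ hψσ hm π γ (g • b) x
      = (averagedExtension hW hB ψ σ hψσ hm π γ b (g⁻¹ • x)).comp (smulCLM hW g⁻¹) := by
  have hrep : orbitRep G (π (g⁻¹ • x)) = orbitRep G (π x) := by rw [hπ, orbitRep_smul]
  have hstab : (γ (π (g⁻¹ • x)))⁻¹ * g⁻¹ * γ (π x) ∈ stabilizer G (orbitRep G (π x)) := by
    rw [mem_stabilizer_iff, mul_smul, mul_smul, hγ, inv_smul_eq_iff, ← hrep, hγ, hπ]
  change cosetAverage hW hB ψ σ hψσ hm _ _ x (g • b)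
    = (cosetAverage hW hB ψ σ hψσ hm _ _ (g⁻¹ • x) b).comp (smulCLM hW g⁻¹)
  rw [hrep]
  exact cosetAverage_smul hW hB ψ σ hψσ hm hminv hψ hσ ⟨_, hstab⟩ (by group) x b

end AveragedExtension

theorem bounded_dual_functions_relatively_injective_general (G : Type u) [Group G]
    (F : Set (Subgroup G))
    (S : Type u) [MulAction G S]
    (hS : ∀ s : S, RelativelyAmenable (MulAction.stabilizer G s)
      (restrictedFamily F (MulAction.stabilizer G s)))
    (W : Type v) [NormedAddCommGroup W] [NormedSpace ℝ W] [DistribMulAction G W]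
    [SMulCommClass G ℝ W] (hW : ∀ (g : G) (w : W), ‖g • w‖ = ‖w‖)
    (n : ℕ)
    (A : Type w) [NormedAddCommGroup A] [NormedSpace ℝ A] [DistribMulAction G A]
    [SMulCommClass G ℝ A]
    (B : Type w) [NormedAddCommGroup B] [NormedSpace ℝ B] [DistribMulAction G B]
    [SMulCommClass G ℝ B] (hB : ∀ (g : G) (b : B), ‖g • b‖ = ‖b‖)
    (i : A →L[ℝ] B) (hi : ∀ (g : G) (a : A), i (g • a) = g • i a)
    (hstrong : ∃ K : ℝ, 0 ≤ K ∧ ∀ H ∈ F, ∃ σ : B →L[ℝ] A,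
      ‖σ‖ ≤ K ∧ (∀ h : G, h ∈ H → ∀ b, σ (h • b) = h • σ b) ∧ ∀ a, σ (i a) = a)
    (ψ : A →ₗ[ℝ] ((Fin (n + 1) → S) → (W →L[ℝ] ℝ)))
    (hψbdd : ∃ C : ℝ, ∀ (a : A) (x : Fin (n + 1) → S), ‖ψ a x‖ ≤ C * ‖a‖)
    (hψequiv : ∀ (g : G) (a : A) (x : Fin (n + 1) → S),
      ψ (g • a) x = (ψ a (fun j => g⁻¹ • x j)).comp (smulCLM hW g⁻¹)) :
    ∃ Ψ : B →ₗ[ℝ] ((Fin (n + 1) → S) → (W →L[ℝ] ℝ)),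
      (∃ C : ℝ, ∀ (b : B) (x : Fin (n + 1) → S), ‖Ψ b x‖ ≤ C * ‖b‖) ∧
      (∀ (g : G) (b : B) (x : Fin (n + 1) → S),
        Ψ (g • b) x = (Ψ b (fun j => g⁻¹ • x j)).comp (smulCLM hW g⁻¹)) ∧
      ∀ a, Ψ (i a) = ψ a := by
  obtain ⟨C, hC⟩ := hψbdd
  obtain ⟨K, hK, hσ⟩ := hstrong
  choose σ hσnorm hσequiv hσi using hσ
  choose m hm1 hmpos hminv using hS
  choose γ hγ using exists_smul_orbitRep_eq (G := G) (S := S)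
  have hψσ H hH b x : ‖ψ (σ H hH b) x‖ ≤ max C 0 * K * ‖b‖ :=
    calc ‖ψ (σ H hH b) x‖ ≤ max C 0 * ‖σ H hH b‖ :=
          (hC _ x).trans (by gcongr; exact le_max_left _ _)
      _ ≤ max C 0 * (K * ‖b‖) := by gcongr; exact (σ H hH).le_of_opNorm_le (hσnorm H hH) b
      _ = max C 0 * K * ‖b‖ := (mul_assoc ..).symm
  have hm s : IsMean (m s) := ⟨hm1 s, hmpos s⟩
  have hψ (g : G) : conjSMul hW g ψ = ψ := conjSMul_eq_self hW (hψequiv g)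
  exact ⟨averagedExtension hW hB ψ σ hψσ hm (fun x => x 0) γ,
    ⟨_, norm_averagedExtension_apply_le hW hB ψ σ hψσ hm (by positivity) _ γ⟩,
    averagedExtension_smul hW hB ψ σ hψσ hm hminv hψ hσequiv (fun _ _ => rfl) hγ,
    averagedExtension_map hW hB ψ σ hψσ hm hψ i hi hσi _ γ⟩

/-- Let `S` be a `G`-set all of whose stabilizers `G_s` are
amenable relative to `F|_{G_s}`, and let `W^# = W →L[ℝ] ℝ` be the dual of a normed
`ℝG`-module `W` (with action `(g • φ) w = φ (g⁻¹ • w)`).  Then for every `n ≥ 0` the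
normed `ℝG`-module `B(S^{n+1}, W^#)` of bounded functions `S^{n+1} → W^#` (sup norm,
action `(g • f) x = g • f (g⁻¹ • x)`) is relatively `F`-injective. -/
theorem bounded_dual_functions_relatively_injective (G : Type u) [Group G]
    (F : Set (Subgroup G)) (hF : IsFamily F)
    (S : Type u) [MulAction G S]
    (hS : ∀ s : S, RelativelyAmenable (MulAction.stabilizer G s)
      (restrictedFamily F (MulAction.stabilizer G s)))
    (W : Type v) [NormedAddCommGroup W] [NormedSpace ℝ W] [DistribMulAction G W]
    [SMulCommClass G ℝ W] (hW : ∀ (g : G) (w : W), ‖g • w‖ = ‖w‖)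
    (n : ℕ)
    (A : Type w) [NormedAddCommGroup A] [NormedSpace ℝ A] [DistribMulAction G A]
    [SMulCommClass G ℝ A] (hA : ∀ (g : G) (a : A), ‖g • a‖ = ‖a‖)
    (B : Type w) [NormedAddCommGroup B] [NormedSpace ℝ B] [DistribMulAction G B]
    [SMulCommClass G ℝ B] (hB : ∀ (g : G) (b : B), ‖g • b‖ = ‖b‖)
    (i : A →L[ℝ] B) (hi : ∀ (g : G) (a : A), i (g • a) = g • i a)
    (hstrong : ∃ K : ℝ, 0 ≤ K ∧ ∀ H ∈ F, ∃ σ : B →L[ℝ] A,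
      ‖σ‖ ≤ K ∧ (∀ h : G, h ∈ H → ∀ b, σ (h • b) = h • σ b) ∧ ∀ a, σ (i a) = a)
    (ψ : A →ₗ[ℝ] ((Fin (n + 1) → S) → (W →L[ℝ] ℝ)))
    (hψbdd : ∃ C : ℝ, ∀ (a : A) (x : Fin (n + 1) → S), ‖ψ a x‖ ≤ C * ‖a‖)
    (hψequiv : ∀ (g : G) (a : A) (x : Fin (n + 1) → S),
      ψ (g • a) x = (ψ a (fun j => g⁻¹ • x j)).comp (smulCLM hW g⁻¹)) :
    ∃ Ψ : B →ₗ[ℝ] ((Fin (n + 1) → S) → (W →L[ℝ] ℝ)),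
      (∃ C : ℝ, ∀ (b : B) (x : Fin (n + 1) → S), ‖Ψ b x‖ ≤ C * ‖b‖) ∧
      (∀ (g : G) (b : B) (x : Fin (n + 1) → S),
        Ψ (g • b) x = (Ψ b (fun j => g⁻¹ • x j)).comp (smulCLM hW g⁻¹)) ∧
      ∀ a, Ψ (i a) = ψ a :=
  bounded_dual_functions_relatively_injective_general G F S hS W hW n A B hB i hi hstrong ψ hψbdd
    hψequiv

end RelBdd
end

section
/- Let G be a group and F ⊆ G' two families of subgroups of G. Suppose that every subgroup H ∈ G' is amenable relative to the family F|_H = {L ∩ H : L ∈ F} (i.e. the H-set ⨿_{L∈F|_H} H/L admits an H-invariant mean). Then for every normed ℝG-module W and every n ≥ 0, the restriction map given by precomposition with the inclusion of G-sets (G/F)^{n+1} ⊆ (G/G')^{n+1} — a cochain map from the complex of bounded G-equivariant W^#-valued cochains on (G/G')^{•+1} to that on (G/F)^{•+1} — induces an isomorphism on cohomology H^n_{G',b}(G;W^#) → H^n_{F,b}(G;W^#). -/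
open scoped BigOperators

universe u v w

namespace RelBdd

variable {G : Type u} [Group G]

/-- The inclusion of `G`-sets `G/F ⊆ G/G'` for families `F ⊆ G'`. -/
def inclCos {G : Type u} [Group G] {F F' : Set (Subgroup G)} (h : F ⊆ F') :
    Cos G F → Cos G F' :=
  fun x => ⟨⟨(x.1 : Subgroup G), h x.1.2⟩, x.2⟩

/-!
Write `S = G/F`, `X = G/G'` and `i : S → X` for the inclusion. Relative amenability gives a
`G`-equivariant family of means `μ x` on `ℓ∞(S)`, `x ∈ X`: for `x = gH` push the `H`-invariant
mean on `H/F|_H` forward to `S` and translate it by `g`. Integrating cochains coordinatewise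
against these means is a cochain map `α` from cochains on `S` to cochains on `X`. Both `i^* ∘ α`
and `α ∘ i^*` are integration against an equivariant family of means on the very set that indexes
it (`μ ∘ i` on `S`, the push-forwards `i_* μ x` on `X`), and such an integration is chain
homotopic to the identity through the prism operator
`h F (x₀, …, x_{n-1}) = ∑ₖ (-1)ᵏ F (x₀, …, x_k, μ x_k, …, μ x_{n-1})`.
So `α` inverts the restriction `i^*` in cohomology. All of this is done for real cochains and
carried over to `W^#`-valued ones pointwise in `w ∈ W`.
-/

section IteratedMean

variable {P A : Type*}

/-- A mean on `ℓ∞(A)` extended to a linear functional on all of `A → ℝ`; only its values on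
bounded functions matter, and positivity is replaced by the equivalent bound `‖m F‖ ≤ sup ‖F‖`. -/
structure IsMean_s12 (m : (A → ℝ) →ₗ[ℝ] ℝ) : Prop where
  map_const : ∀ r : ℝ, m (fun _ => r) = r
  norm_le : ∀ (F : A → ℝ) (C : ℝ), (∀ a, ‖F a‖ ≤ C) → ‖m F‖ ≤ C

theorem IsMean_s12.comp_funLeft {A' : Type*} {m : (A → ℝ) →ₗ[ℝ] ℝ} (hm : IsMean_s12 m) (i : A → A') :
    IsMean_s12 (m ∘ₗ LinearMap.funLeft ℝ ℝ i) :=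
  ⟨fun r => hm.map_const r, fun _ C hF => hm.norm_le _ C fun a => hF (i a)⟩

def IsEquivariantFamily (K : Type*) [SMul K P] [SMul K A] (μ : P → (A → ℝ) →ₗ[ℝ] ℝ) : Prop :=
  ∀ (g : K) (p : P) (F : A → ℝ), Bdd F → μ (g • p) F = μ p fun a => F (g • a)

def iterMean (μ : P → (A → ℝ) →ₗ[ℝ] ℝ) : ∀ {n : ℕ}, (Fin n → P) → ((Fin n → A) → ℝ) →ₗ[ℝ] ℝ
  | 0, _ => LinearMap.proj Fin.elim0
  | n + 1, p => μ (p 0) ∘ₗ LinearMap.pi fun σ => iterMean μ (Fin.tail p) ∘ₗ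
      LinearMap.funLeft ℝ ℝ fun y : Fin n → A => (Fin.cons σ y : Fin (n + 1) → A)

def avgOp (μ : P → (A → ℝ) →ₗ[ℝ] ℝ) {n : ℕ} : ((Fin n → A) → ℝ) →ₗ[ℝ] ((Fin n → P) → ℝ) :=
  LinearMap.pi (iterMean μ)

variable {μ : P → (A → ℝ) →ₗ[ℝ] ℝ}

theorem iterMean_succ {n : ℕ} (p : Fin (n + 1) → P) (F : (Fin (n + 1) → A) → ℝ) :
    iterMean μ p F = μ (p 0) fun σ => iterMean μ (Fin.tail p) fun y => F (Fin.cons σ y) :=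
  rfl

theorem avgOp_apply {n : ℕ} (F : (Fin n → A) → ℝ) (p : Fin n → P) :
    avgOp μ F p = iterMean μ p F :=
  rfl

theorem iterMean_const (hμ : ∀ p, IsMean_s12 (μ p)) {n : ℕ} (p : Fin n → P) (r : ℝ) :
    iterMean μ p (fun _ => r) = r := by
  induction n with
  | zero => rfl
  | succ n ih => simp only [iterMean_succ, ih, (hμ _).map_const]

theorem norm_iterMean_le (hμ : ∀ p, IsMean_s12 (μ p)) {n : ℕ} (p : Fin n → P)
    {F : (Fin n → A) → ℝ} {C : ℝ} (hF : ∀ y, ‖F y‖ ≤ C) : ‖iterMean μ p F‖ ≤ C := by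
  induction n with
  | zero => exact hF _
  | succ n ih => exact (hμ _).norm_le _ _ fun σ => ih _ fun y => hF _

theorem iterMean_comp_tail (hμ : ∀ p, IsMean_s12 (μ p)) {n : ℕ} (p : Fin (n + 1) → P)
    (F : (Fin n → A) → ℝ) :
    iterMean μ p (fun y => F (Fin.tail y)) = iterMean μ (Fin.tail p) F := by
  simp only [iterMean_succ, Fin.tail_cons, (hμ _).map_const]

theorem iterMean_comp_succAbove (hμ : ∀ p, IsMean_s12 (μ p)) {n : ℕ} (p : Fin (n + 1) → P)
    (j : Fin (n + 1)) (F : (Fin n → A) → ℝ) :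
    iterMean μ p (fun y => F fun l => y (j.succAbove l))
      = iterMean μ (fun l => p (j.succAbove l)) F := by
  induction n with
  | zero =>
    obtain rfl : j = 0 := Fin.fin_one_eq_zero j
    exact iterMean_comp_tail hμ p F
  | succ n ih =>
    induction j using Fin.cases with
    | zero => exact iterMean_comp_tail hμ p F
    | succ j =>
      rw [iterMean_succ, iterMean_succ, Fin.succ_succAbove_zero]
      congr 1
      funext σ
      have hcons : ∀ y : Fin (n + 1) → A,
          (fun l => (Fin.cons σ y : Fin (n + 2) → A) (j.succ.succAbove l))
            = Fin.cons σ fun l => y (j.succAbove l) :=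
        fun y => Fin.cons_comp_succ_succAbove σ y j
      have htail : Fin.tail (fun l => p (j.succ.succAbove l))
          = fun l => Fin.tail p (j.succAbove l) :=
        funext fun l => congrArg p (Fin.succ_succAbove_succ j l)
      simp only [hcons, htail]
      exact ih (Fin.tail p) j fun z => F (Fin.cons σ z)

theorem iterMean_comp {P' : Type*} (i : P' → P) {n : ℕ} (p : Fin n → P')
    (F : (Fin n → A) → ℝ) :
    iterMean (fun q => μ (i q)) p F = iterMean μ (fun j => i (p j)) F := by
  induction n with
  | zero => rfl
  | succ n ih => simp only [iterMean_succ, ih]; rfl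

theorem iterMean_funLeft {A' : Type*} (i : A → A') {n : ℕ} (p : Fin n → P)
    (F : (Fin n → A') → ℝ) :
    iterMean (fun q => μ q ∘ₗ LinearMap.funLeft ℝ ℝ i) p F
      = iterMean μ p fun y => F fun j => i (y j) := by
  induction n with
  | zero => exact congrArg F (Subsingleton.elim _ _)
  | succ n ih =>
    rw [iterMean_succ, iterMean_succ, LinearMap.comp_apply]
    congr 1
    funext σ
    rw [LinearMap.funLeft_apply, ih]
    congr 2
    funext y
    congr 1
    funext j
    cases j using Fin.cases <;> rfl

theorem iterMean_smul {K : Type*} [SMul K P] [SMul K A] (hμ : ∀ p, IsMean_s12 (μ p))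
    (hμK : IsEquivariantFamily K μ) (g : K) {n : ℕ} (p : Fin n → P) {F : (Fin n → A) → ℝ}
    (hF : Bdd F) :
    iterMean μ (fun j => g • p j) F = iterMean μ p fun y => F fun j => g • y j := by
  induction n with
  | zero => exact congrArg F (Subsingleton.elim _ _)
  | succ n ih =>
    obtain ⟨C, hC⟩ := hF
    rw [iterMean_succ, iterMean_succ,
      hμK g _ _ ⟨C, fun σ => norm_iterMean_le hμ _ fun y => hC _⟩]
    congr 1
    funext σ
    rw [show Fin.tail (fun j => g • p j) = fun j => g • Fin.tail p j from rfl,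
      ih _ ⟨C, fun y => hC _⟩]
    congr 1
    funext y
    congr 1
    funext j
    cases j using Fin.cases <;> rfl

theorem delta_avgOp (hμ : ∀ p, IsMean_s12 (μ p)) {n : ℕ} (F : (Fin (n + 1) → A) → ℝ) :
    delta n (avgOp μ F) = avgOp μ (delta n F) := by
  have hdelta : delta n F
      = ∑ i : Fin (n + 2), ((-1 : ℝ) ^ (i : ℕ)) • fun z => F fun l => z (i.succAbove l) := by
    funext z
    simp [delta]
  funext p
  simp only [hdelta, map_sum, map_smul, avgOp_apply, iterMean_comp_succAbove hμ]
  rfl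

end IteratedMean

section FinCombinatorics

theorem val_succAbove_eq_ite {n : ℕ} (i : Fin (n + 1)) (l : Fin n) :
    ((i.succAbove l : Fin (n + 1)) : ℕ) = if (l : ℕ) < i then (l : ℕ) else l + 1 := by
  rcases lt_or_ge (l : ℕ) i with h | h
  · rw [Fin.succAbove_of_castSucc_lt _ _ (by simpa [Fin.lt_def] using h), if_pos h,
      Fin.val_castSucc]
  · rw [Fin.succAbove_of_le_castSucc _ _ (by simpa [Fin.le_def] using h), if_neg (by omega),
      Fin.val_succ]

theorem val_predAbove_eq_ite {n : ℕ} (k : Fin n) (l : Fin (n + 1)) :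
    ((k.predAbove l : Fin n) : ℕ) = if (k : ℕ) < l then (l : ℕ) - 1 else l := by
  rcases lt_or_ge (k : ℕ) l with h | h
  · rw [Fin.predAbove_of_castSucc_lt _ _ (by simpa [Fin.lt_def] using h), if_pos h,
      Fin.val_pred]
  · rw [Fin.predAbove_of_le_castSucc _ _ (by simpa [Fin.le_def] using h), if_neg (by omega),
      Fin.coe_castPred]

theorem succAbove_predAbove_involutive (n : ℕ) :
    Function.Involutive fun p : Fin (n + 1) × Fin n => (p.1.succAbove p.2, p.2.predAbove p.1) := by
  rintro ⟨i, j⟩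
  ext <;> simp only [val_succAbove_eq_ite, val_predAbove_eq_ite] <;> split_ifs <;> omega

theorem sum_sum_succAbove_predAbove {M : Type*} [AddCommMonoid M] {n : ℕ}
    (f : Fin (n + 1) → Fin n → M) :
    ∑ i : Fin (n + 1), ∑ j : Fin n, f (i.succAbove j) (j.predAbove i) = ∑ i, ∑ j, f i j := by
  simpa only [← Fintype.sum_prod_type', Function.Involutive.coe_toPerm] using
    Equiv.sum_comp ((succAbove_predAbove_involutive n).toPerm _)
      fun p : Fin (n + 1) × Fin n => f p.1 p.2

end FinCombinatorics

section Homotopy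

variable {X : Type*}

def mix {N : ℕ} (k : ℕ) (x y : Fin N → X) : Fin N → X :=
  fun i => if (i : ℕ) < k then x i else y i

def partialMean (μ : X → (X → ℝ) →ₗ[ℝ] ℝ) (k : ℕ) {N : ℕ} :
    ((Fin N → X) → ℝ) →ₗ[ℝ] ((Fin N → X) → ℝ) :=
  LinearMap.pi fun x => iterMean μ x ∘ₗ LinearMap.funLeft ℝ ℝ (mix k x)

/-- The prism operator: `predAbove` doubles `x_k`, then `partialMean` averages the coordinates
after the first `k + 1`. -/
def homotopyOp (μ : X → (X → ℝ) →ₗ[ℝ] ℝ) {M : ℕ} :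
    ((Fin (M + 1) → X) → ℝ) →ₗ[ℝ] ((Fin M → X) → ℝ) :=
  ∑ k : Fin M, ((-1 : ℝ) ^ (k : ℕ)) •
    LinearMap.funLeft ℝ ℝ (fun (x : Fin M → X) l => x (k.predAbove l)) ∘ₗ
      partialMean μ ((k : ℕ) + 1)

def faceTerm (μ : X → (X → ℝ) →ₗ[ℝ] ℝ) {m : ℕ} (F : (Fin (m + 2) → X) → ℝ)
    (x : Fin (m + 2) → X) (k : Fin (m + 2)) (i : Fin (m + 3)) : ℝ :=
  (-1 : ℝ) ^ (k : ℕ) * (-1 : ℝ) ^ (i : ℕ) *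
    partialMean μ (if (i : ℕ) < (k : ℕ) + 1 then (k : ℕ) else (k : ℕ) + 1) F
      fun l => x (k.predAbove (i.succAbove l))

variable {μ : X → (X → ℝ) →ₗ[ℝ] ℝ}

theorem partialMean_apply (k : ℕ) {N : ℕ} (F : (Fin N → X) → ℝ) (x : Fin N → X) :
    partialMean μ k F x = iterMean μ x fun y => F (mix k x y) :=
  rfl

theorem partialMean_zero_apply {N : ℕ} (F : (Fin N → X) → ℝ) (x : Fin N → X) :
    partialMean μ 0 F x = iterMean μ x F :=
  rfl

theorem partialMean_of_le (hμ : ∀ x, IsMean_s12 (μ x)) {N k : ℕ} (hk : N ≤ k)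
    (F : (Fin N → X) → ℝ) (x : Fin N → X) : partialMean μ k F x = F x := by
  have hmix : ∀ y, mix k x y = x := fun y => funext fun i => if_pos (by omega)
  simp only [partialMean_apply, hmix, iterMean_const hμ]

theorem homotopyOp_apply {M : ℕ} (F : (Fin (M + 1) → X) → ℝ) (x : Fin M → X) :
    homotopyOp μ F x = ∑ k : Fin M,
      (-1 : ℝ) ^ (k : ℕ) * partialMean μ ((k : ℕ) + 1) F fun l => x (k.predAbove l) := by
  simp [homotopyOp]

theorem partialMean_smul {K : Type*} [SMul K X] (hμ : ∀ x, IsMean_s12 (μ x))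
    (hμK : IsEquivariantFamily K μ) (g : K) (k : ℕ) {N : ℕ} {F : (Fin N → X) → ℝ} (hF : Bdd F)
    (x : Fin N → X) :
    partialMean μ k F (fun j => g • x j) = partialMean μ k (fun y => F fun j => g • y j) x := by
  obtain ⟨C, hC⟩ := hF
  have hmix : ∀ y : Fin N → X,
      mix k (fun j => g • x j) (fun j => g • y j) = fun j => g • mix k x y j :=
    fun y => funext fun j => by unfold mix; split_ifs <;> rfl
  rw [partialMean_apply, partialMean_apply, iterMean_smul hμ hμK g x ⟨C, fun y => hC _⟩]
  simp only [hmix]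

theorem homotopyOp_smul {K : Type*} [SMul K X] (hμ : ∀ x, IsMean_s12 (μ x))
    (hμK : IsEquivariantFamily K μ) (g : K) {M : ℕ} {F : (Fin (M + 1) → X) → ℝ} (hF : Bdd F)
    (x : Fin M → X) :
    homotopyOp μ F (fun j => g • x j) = homotopyOp μ (fun y => F fun j => g • y j) x := by
  simp only [homotopyOp_apply]
  exact Finset.sum_congr rfl fun k _ => by rw [partialMean_smul hμ hμK g _ hF]

theorem partialMean_comp_succAbove (hμ : ∀ x, IsMean_s12 (μ x)) (k : ℕ) {N : ℕ}
    (i : Fin (N + 1)) (F : (Fin N → X) → ℝ) (x : Fin (N + 1) → X) :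
    partialMean μ k (fun z => F fun l => z (i.succAbove l)) x
      = partialMean μ (if (i : ℕ) < k then k - 1 else k) F fun l => x (i.succAbove l) := by
  have hmix : ∀ y : Fin (N + 1) → X, (fun l => mix k x y (i.succAbove l))
      = mix (if (i : ℕ) < k then k - 1 else k) (fun l => x (i.succAbove l))
          (fun l => y (i.succAbove l)) := fun y => by
    funext l
    simp only [mix, val_succAbove_eq_ite]
    congr 1
    apply propext
    split_ifs <;> omega
  simp only [partialMean_apply, hmix]
  exact iterMean_comp_succAbove hμ x i fun z => F (mix _ (fun l => x (i.succAbove l)) z)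

theorem homotopyOp_delta_apply (hμ : ∀ x, IsMean_s12 (μ x)) {m : ℕ} (F : (Fin (m + 2) → X) → ℝ)
    (x : Fin (m + 2) → X) :
    homotopyOp μ (delta (m + 1) F) x = ∑ k, ∑ i, faceTerm μ F x k i := by
  have hdelta : delta (m + 1) F
      = ∑ i : Fin (m + 3), ((-1 : ℝ) ^ (i : ℕ)) • fun z => F fun l => z (i.succAbove l) := by
    funext z
    simp [delta]
  rw [homotopyOp_apply]
  refine Finset.sum_congr rfl fun k _ => ?_
  simp only [hdelta, map_sum, map_smul, Finset.sum_apply, Pi.smul_apply, smul_eq_mul,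
    partialMean_comp_succAbove hμ, Nat.add_sub_cancel, Finset.mul_sum, faceTerm, mul_assoc]

theorem delta_homotopyOp_apply {m : ℕ} (F : (Fin (m + 2) → X) → ℝ) (x : Fin (m + 2) → X) :
    delta m (homotopyOp μ F) x = ∑ i : Fin (m + 2), ∑ j : Fin (m + 1),
      (-1 : ℝ) ^ (i : ℕ) * (-1 : ℝ) ^ (j : ℕ) *
        partialMean μ ((j : ℕ) + 1) F fun l => x (i.succAbove (j.predAbove l)) := by
  simp only [delta, homotopyOp_apply, smul_eq_mul, Finset.mul_sum, mul_assoc]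

theorem faceTerm_castSucc {m : ℕ} (F : (Fin (m + 2) → X) → ℝ) (x : Fin (m + 2) → X)
    (k : Fin (m + 2)) : faceTerm μ F x k k.castSucc = partialMean μ k F x := by
  have hx : (fun l => x (k.predAbove (k.castSucc.succAbove l))) = x := by
    funext l
    congr 1
    ext
    simp only [val_predAbove_eq_ite, val_succAbove_eq_ite, Fin.val_castSucc]
    split_ifs <;> omega
  simp only [faceTerm, Fin.val_castSucc, lt_add_one, if_true, hx]
  rw [← pow_add, Even.neg_one_pow ⟨_, rfl⟩, one_mul]

theorem faceTerm_succ {m : ℕ} (F : (Fin (m + 2) → X) → ℝ) (x : Fin (m + 2) → X)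
    (k : Fin (m + 2)) : faceTerm μ F x k k.succ = -partialMean μ ((k : ℕ) + 1) F x := by
  have hx : (fun l => x (k.predAbove (k.succ.succAbove l))) = x := by
    funext l
    congr 1
    ext
    simp only [val_predAbove_eq_ite, val_succAbove_eq_ite, Fin.val_succ]
    split_ifs <;> omega
  simp only [faceTerm, Fin.val_succ, lt_irrefl, if_false, hx]
  rw [← pow_add, Odd.neg_one_pow ⟨k, by ring⟩, neg_one_mul]

theorem faceTerm_succAbove_predAbove {m : ℕ} (F : (Fin (m + 2) → X) → ℝ)
    (x : Fin (m + 2) → X) (i : Fin (m + 2)) (j : Fin (m + 1)) :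
    faceTerm μ F x (i.succAbove j)
        ((i.succAbove j).castSucc.succAbove ((i.succAbove j).succAbove (j.predAbove i)))
      = -((-1 : ℝ) ^ (i : ℕ) * (-1 : ℝ) ^ (j : ℕ) *
          partialMean μ ((j : ℕ) + 1) F fun l => x (i.succAbove (j.predAbove l))) := by
  set k := i.succAbove j
  set f := k.castSucc.succAbove (k.succAbove (j.predAbove i))
  have hk : (k : ℕ) = if (j : ℕ) < i then (j : ℕ) else j + 1 := val_succAbove_eq_ite i j
  have hf : (f : ℕ) = if (j : ℕ) < i then (i : ℕ) + 1 else i := by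
    simp only [f, val_succAbove_eq_ite, val_predAbove_eq_ite, Fin.val_castSucc, hk]
    split_ifs <;> omega
  have hsign : (k : ℕ) + f = (i : ℕ) + j + 1 := by rw [hk, hf]; split_ifs <;> omega
  have hindex : (if (f : ℕ) < (k : ℕ) + 1 then (k : ℕ) else (k : ℕ) + 1) = (j : ℕ) + 1 := by
    rw [hk, hf]; split_ifs <;> omega
  have hx : (fun l => x (k.predAbove (f.succAbove l)))
      = fun l => x (i.succAbove (j.predAbove l)) := by
    funext l
    congr 1
    ext
    simp only [val_predAbove_eq_ite, val_succAbove_eq_ite, hk, hf]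
    split_ifs <;> omega
  rw [faceTerm, hindex, hx, ← pow_add, hsign, pow_succ, pow_add]
  ring

/-- The faces `i = k, k + 1` of `h (δ F)` telescope to `partialMean μ 0 F - F`; the other faces,
reindexed by `sum_sum_succAbove_predAbove`, cancel `δ (h F)`. -/
theorem delta_homotopyOp_add_homotopyOp_delta (hμ : ∀ x, IsMean_s12 (μ x)) {m : ℕ}
    (F : (Fin (m + 2) → X) → ℝ) (x : Fin (m + 2) → X) :
    delta m (homotopyOp μ F) x + homotopyOp μ (delta (m + 1) F) x
      = partialMean μ 0 F x - F x := by
  have hsplit : ∀ k : Fin (m + 2), ∑ i, faceTerm μ F x k i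
      = (partialMean μ k F x - partialMean μ ((k : ℕ) + 1) F x)
        + ∑ l, faceTerm μ F x k (k.castSucc.succAbove (k.succAbove l)) := fun k => by
    rw [Fin.sum_univ_succAbove _ k.castSucc, Fin.sum_univ_succAbove _ k,
      Fin.succAbove_castSucc_self, faceTerm_castSucc, faceTerm_succ]
    ring
  have htelescope :
      ∑ k : Fin (m + 2), (partialMean μ k F x - partialMean μ ((k : ℕ) + 1) F x)
        = partialMean μ 0 F x - F x := by
    rw [Fin.sum_univ_eq_sum_range (fun k => partialMean μ k F x - partialMean μ (k + 1) F x),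
      Finset.sum_range_sub', partialMean_of_le hμ le_rfl]
  rw [homotopyOp_delta_apply hμ, Finset.sum_congr rfl fun k _ => hsplit k,
    Finset.sum_add_distrib, htelescope, ← sum_sum_succAbove_predAbove fun k l =>
      faceTerm μ F x k (k.castSucc.succAbove (k.succAbove l))]
  simp only [faceTerm_succAbove_predAbove, Finset.sum_neg_distrib, delta_homotopyOp_apply]
  ring

end Homotopy

theorem apply_eq_of_delta_zero_eq_zero {S V : Type*} [AddCommGroup V] [Module ℝ V]
    {f : (Fin 1 → S) → V} (hf : delta 0 f = 0) (x y : Fin 1 → S) : f x = f y := by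
  have h := congrFun hf ![y 0, x 0]
  have hx : (fun j : Fin 1 => ![y 0, x 0] ((0 : Fin 2).succAbove j)) = x := by
    funext j; fin_cases j; rfl
  have hy : (fun j : Fin 1 => ![y 0, x 0] ((1 : Fin 2).succAbove j)) = y := by
    funext j; fin_cases j; rfl
  rw [delta, Fin.sum_univ_two, hx, hy] at h
  simpa [sub_eq_zero, ← sub_eq_add_neg] using h

theorem delta_sub {S V : Type*} [AddCommGroup V] [Module ℝ V] {n : ℕ}
    (f f' : (Fin (n + 1) → S) → V) : delta n (f - f') = delta n f - delta n f' := by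
  funext x
  simp only [delta, Pi.sub_apply, smul_sub, Finset.sum_sub_distrib]

section DualLift

variable {α β : Type*} {W : Type*} [NormedAddCommGroup W] [NormedSpace ℝ W]

def IsBoundedOp (T : (α → ℝ) →ₗ[ℝ] (β → ℝ)) : Prop :=
  ∃ K, 0 ≤ K ∧ ∀ (F : α → ℝ) (C : ℝ), (∀ a, ‖F a‖ ≤ C) → ∀ b, ‖T F b‖ ≤ K * C

open Classical in
/-- `T` applied to a `W^#`-valued function pointwise in `w ∈ W`. Where the result is not a bounded
functional (which never happens for bounded `T` and `f`) it is the junk value `0`. -/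
noncomputable def dualLift (T : (α → ℝ) →ₗ[ℝ] (β → ℝ)) (f : α → W →L[ℝ] ℝ) (b : β) :
    W →L[ℝ] ℝ :=
  if h : ∃ C, ∀ w, ‖T (fun a => f a w) b‖ ≤ C * ‖w‖ then
    (LinearMap.proj b ∘ₗ T ∘ₗ LinearMap.pi fun a => (f a : W →ₗ[ℝ] ℝ)).mkContinuousOfExistsBound h
  else 0

theorem Bdd.apply {f : α → W →L[ℝ] ℝ} (hf : Bdd f) (w : W) : Bdd fun a => f a w := by
  obtain ⟨C, hC⟩ := hf
  exact ⟨C * ‖w‖, fun a => ((f a).le_opNorm w).trans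
    (mul_le_mul_of_nonneg_right (hC a) (norm_nonneg w))⟩

theorem IsBoundedOp.exists_bound {T : (α → ℝ) →ₗ[ℝ] (β → ℝ)} (hT : IsBoundedOp T)
    {f : α → W →L[ℝ] ℝ} (hf : Bdd f) :
    ∃ C, 0 ≤ C ∧ ∀ b w, ‖T (fun a => f a w) b‖ ≤ C * ‖w‖ := by
  obtain ⟨K, hK0, hK⟩ := hT
  obtain ⟨D, hD⟩ := hf
  refine ⟨K * max D 0, mul_nonneg hK0 (le_max_right _ _), fun b w => ?_⟩
  rw [mul_assoc]
  exact hK _ _ (fun a => ((f a).le_opNorm w).trans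
    (mul_le_mul_of_nonneg_right ((hD a).trans (le_max_left _ _)) (norm_nonneg w))) b

theorem dualLift_apply {T : (α → ℝ) →ₗ[ℝ] (β → ℝ)} (hT : IsBoundedOp T)
    {f : α → W →L[ℝ] ℝ} (hf : Bdd f) (b : β) (w : W) :
    dualLift T f b w = T (fun a => f a w) b := by
  obtain ⟨C, -, hC⟩ := hT.exists_bound hf
  rw [dualLift, dif_pos ⟨C, hC b⟩]
  rfl

theorem bdd_dualLift {T : (α → ℝ) →ₗ[ℝ] (β → ℝ)} (hT : IsBoundedOp T)
    {f : α → W →L[ℝ] ℝ} (hf : Bdd f) : Bdd (dualLift T f) := by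
  obtain ⟨C, hC0, hC⟩ := hT.exists_bound hf
  refine ⟨C, fun b => ContinuousLinearMap.opNorm_le_bound _ hC0 fun w => ?_⟩
  rw [dualLift_apply hT hf]
  exact hC b w

theorem delta_apply_apply {S : Type*} {n : ℕ} (f : (Fin (n + 1) → S) → W →L[ℝ] ℝ)
    (x : Fin (n + 2) → S) (w : W) : delta n f x w = delta n (fun y => f y w) x := by
  simp only [delta, FunLike.coe_sum, Finset.sum_apply, FunLike.coe_smul, Pi.smul_apply]

end DualLift

section BoundedOps

variable {P A : Type*} {μ : P → (A → ℝ) →ₗ[ℝ] ℝ}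

theorem isBoundedOp_avgOp (hμ : ∀ p, IsMean_s12 (μ p)) {n : ℕ} : IsBoundedOp (avgOp μ (n := n)) :=
  ⟨1, zero_le_one, fun _ _ hF p => by rw [one_mul]; exact norm_iterMean_le hμ p hF⟩

variable {X : Type*} {ν : X → (X → ℝ) →ₗ[ℝ] ℝ}

theorem isBoundedOp_homotopyOp (hν : ∀ x, IsMean_s12 (ν x)) {M : ℕ} :
    IsBoundedOp (homotopyOp ν (M := M)) := by
  refine ⟨M, M.cast_nonneg, fun F C hF x => ?_⟩
  rw [homotopyOp_apply]
  refine (norm_sum_le _ _).trans ?_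
  calc ∑ k : Fin M, ‖(-1 : ℝ) ^ (k : ℕ) * partialMean ν ((k : ℕ) + 1) F fun l => x (k.predAbove l)‖
      ≤ ∑ _k : Fin M, C := Finset.sum_le_sum fun k _ => by
        rw [norm_mul, norm_pow, norm_neg, norm_one, one_pow, one_mul, partialMean_apply]
        exact norm_iterMean_le hν _ fun y => hF _
    _ = M * C := by simp

end BoundedOps

section Restriction

variable {W : Type*} [NormedAddCommGroup W] [NormedSpace ℝ W] [DistribMulAction G W]
  [SMulCommClass G ℝ W] {hW : ∀ (g : G) (w : W), ‖g • w‖ = ‖w‖}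

def IsEquivariantCochain {S : Type*} [MulAction G S] (hW : ∀ (g : G) (w : W), ‖g • w‖ = ‖w‖)
    {N : ℕ} (f : (Fin N → S) → W →L[ℝ] ℝ) : Prop :=
  ∀ (g : G) (x : Fin N → S), f (fun j => g • x j) = (f x).comp (smulCLM hW g⁻¹)

theorem Bdd.sub {α V : Type*} [SeminormedAddCommGroup V] {f f' : α → V} (hf : Bdd f)
    (hf' : Bdd f') :
    Bdd fun a => f a - f' a := by
  obtain ⟨C, hC⟩ := hf
  obtain ⟨C', hC'⟩ := hf'
  exact ⟨C + C', fun a => (norm_sub_le _ _).trans (add_le_add (hC a) (hC' a))⟩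

theorem IsEquivariantCochain.sub {S : Type*} [MulAction G S] {N : ℕ}
    {f f' : (Fin N → S) → W →L[ℝ] ℝ} (hf : IsEquivariantCochain hW f)
    (hf' : IsEquivariantCochain hW f') : IsEquivariantCochain hW fun x => f x - f' x :=
  fun g x => by simp only [hf g x, hf' g x, ContinuousLinearMap.sub_comp]

theorem isEquivariantCochain_dualLift {A B : Type*} [MulAction G A] [MulAction G B] {N M : ℕ}
    {T : ((Fin N → A) → ℝ) →ₗ[ℝ] ((Fin M → B) → ℝ)} (hT : IsBoundedOp T)
    (hTG : ∀ (g : G) (F : (Fin N → A) → ℝ), Bdd F → ∀ y,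
      T F (fun j => g • y j) = T (fun z => F fun j => g • z j) y)
    {f : (Fin N → A) → W →L[ℝ] ℝ} (hf : Bdd f) (hfG : IsEquivariantCochain hW f) :
    IsEquivariantCochain hW (dualLift T f) := by
  intro g y
  ext w
  rw [ContinuousLinearMap.comp_apply, dualLift_apply hT hf, dualLift_apply hT hf,
    hTG g _ (hf.apply w)]
  refine congrArg (fun F => T F y) (funext fun z => ?_)
  rw [hfG]
  rfl

theorem delta_apply_eq_zero {S : Type*} {n : ℕ} {f : (Fin (n + 1) → S) → W →L[ℝ] ℝ}
    (hf : delta n f = 0) (w : W) : delta n (fun y => f y w) = 0 :=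
  funext fun x => by rw [← delta_apply_apply, hf]; rfl

variable {S X : Type*} [MulAction G S] [MulAction G X] {i : S → X} {μ : X → (S → ℝ) →ₗ[ℝ] ℝ}

theorem delta_dualLift_avgOp_eq_zero (hμ : ∀ x, IsMean_s12 (μ x)) {n : ℕ}
    {f : (Fin (n + 1) → S) → W →L[ℝ] ℝ} (hfb : Bdd f) (hf : delta n f = 0) :
    delta n (dualLift (avgOp μ) f) = 0 := by
  funext x
  ext w
  rw [delta_apply_apply]
  simp only [dualLift_apply (isBoundedOp_avgOp hμ) hfb, delta_avgOp hμ, delta_apply_eq_zero hf,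
    map_zero]
  rfl

theorem isEquivariantCochain_dualLift_avgOp (hμ : ∀ x, IsMean_s12 (μ x))
    (hμG : IsEquivariantFamily G μ) {n : ℕ} {f : (Fin n → S) → W →L[ℝ] ℝ} (hfb : Bdd f)
    (hfG : IsEquivariantCochain hW f) :
    IsEquivariantCochain hW (dualLift (avgOp μ) f) :=
  isEquivariantCochain_dualLift (isBoundedOp_avgOp hμ)
    (fun g _ hF y => iterMean_smul hμ hμG g y hF) hfb hfG

theorem exists_cocycle_restrict_eq_of_delta_zero_eq_zero (hμ : ∀ x, IsMean_s12 (μ x))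
    (hμG : IsEquivariantFamily G μ) {f : (Fin 1 → S) → W →L[ℝ] ℝ} (hfb : Bdd f)
    (hfG : IsEquivariantCochain hW f) (hf : delta 0 f = 0) :
    ∃ c : (Fin 1 → X) → W →L[ℝ] ℝ, Bdd c ∧ IsEquivariantCochain hW c ∧ delta 0 c = 0 ∧
      ∀ x, c (fun j => i (x j)) = f x := by
  refine ⟨dualLift (avgOp μ) f, bdd_dualLift (isBoundedOp_avgOp hμ) hfb,
    isEquivariantCochain_dualLift_avgOp hμ hμG hfb hfG, delta_dualLift_avgOp_eq_zero hμ hfb hf,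
    fun x => ?_⟩
  ext w
  have hconst : (fun y => f y w) = fun _ => f x w :=
    funext fun y => by rw [apply_eq_of_delta_zero_eq_zero hf y x]
  rw [dualLift_apply (isBoundedOp_avgOp hμ) hfb, avgOp_apply, hconst, iterMean_const hμ]

theorem eq_of_restrict_eq_of_delta_zero_eq_zero (hμ : ∀ x, IsMean_s12 (μ x))
    {c c' : (Fin 1 → X) → W →L[ℝ] ℝ} (hc : delta 0 c = 0) (hc' : delta 0 c' = 0)
    (h : ∀ x : Fin 1 → S, c (fun j => i (x j)) = c' (fun j => i (x j))) : c = c' := by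
  have hmean : ∀ {c : (Fin 1 → X) → W →L[ℝ] ℝ}, delta 0 c = 0 → ∀ x w,
      c x w = iterMean μ x fun y => c (fun j => i (y j)) w := fun {c} hc x w => by
    have hconst : (fun y : Fin 1 → S => c (fun j => i (y j)) w) = fun _ => c x w :=
      funext fun y => by rw [apply_eq_of_delta_zero_eq_zero hc _ x]
    rw [hconst, iterMean_const hμ]
  funext x
  ext w
  rw [hmean hc, hmean hc']
  simp only [h]

theorem exists_cocycle_restrict_eq_add_delta (hμ : ∀ x, IsMean_s12 (μ x))
    (hμG : IsEquivariantFamily G μ) (hi : ∀ (g : G) (s : S), i (g • s) = g • i s) {m : ℕ}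
    {f : (Fin (m + 2) → S) → W →L[ℝ] ℝ} (hfb : Bdd f) (hfG : IsEquivariantCochain hW f)
    (hf : delta (m + 1) f = 0) :
    ∃ c : (Fin (m + 2) → X) → W →L[ℝ] ℝ, Bdd c ∧ IsEquivariantCochain hW c ∧
      delta (m + 1) c = 0 ∧ ∃ b : (Fin (m + 1) → S) → W →L[ℝ] ℝ, Bdd b ∧
        IsEquivariantCochain hW b ∧ ∀ x, c (fun j => i (x j)) = f x + delta m b x := by
  set ν : S → (S → ℝ) →ₗ[ℝ] ℝ := fun s => μ (i s)
  have hν : ∀ s, IsMean_s12 (ν s) := fun s => hμ (i s)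
  have hνG : IsEquivariantFamily G ν := fun g s F hF => by simp only [ν, hi, hμG g _ F hF]
  have hh := isBoundedOp_homotopyOp hν (M := m + 1)
  refine ⟨dualLift (avgOp μ) f, bdd_dualLift (isBoundedOp_avgOp hμ) hfb,
    isEquivariantCochain_dualLift_avgOp hμ hμG hfb hfG, delta_dualLift_avgOp_eq_zero hμ hfb hf,
    dualLift (homotopyOp ν) f, bdd_dualLift hh hfb,
    isEquivariantCochain_dualLift hh (fun g _ hF y => homotopyOp_smul hν hνG g hF y) hfb hfG,
    fun x => ?_⟩
  ext w
  have hprism := delta_homotopyOp_add_homotopyOp_delta hν (fun y => f y w) x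
  rw [delta_apply_eq_zero hf, map_zero, Pi.zero_apply, add_zero, partialMean_zero_apply,
    iterMean_comp] at hprism
  rw [add_apply, delta_apply_apply, dualLift_apply (isBoundedOp_avgOp hμ) hfb, avgOp_apply]
  simp only [dualLift_apply hh hfb]
  linarith

theorem exists_eq_delta_of_restrict_eq_delta (hμ : ∀ x, IsMean_s12 (μ x))
    (hμG : IsEquivariantFamily G μ) (hi : ∀ (g : G) (s : S), i (g • s) = g • i s) {m : ℕ}
    {c : (Fin (m + 2) → X) → W →L[ℝ] ℝ} (hcb : Bdd c) (hcG : IsEquivariantCochain hW c)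
    (hc : delta (m + 1) c = 0) {b : (Fin (m + 1) → S) → W →L[ℝ] ℝ} (hbb : Bdd b)
    (hbG : IsEquivariantCochain hW b) (hcb' : ∀ x, c (fun j => i (x j)) = delta m b x) :
    ∃ b' : (Fin (m + 1) → X) → W →L[ℝ] ℝ, Bdd b' ∧ IsEquivariantCochain hW b' ∧
      c = delta m b' := by
  set ν : X → (X → ℝ) →ₗ[ℝ] ℝ := fun x => μ x ∘ₗ LinearMap.funLeft ℝ ℝ i
  have hν : ∀ x, IsMean_s12 (ν x) := fun x => (hμ x).comp_funLeft i
  have hνG : IsEquivariantFamily G ν := by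
    rintro g x F ⟨C, hC⟩
    change μ (g • x) (fun s => F (i s)) = μ x fun s => F (g • i s)
    simp only [hμG g x _ ⟨C, fun s => hC _⟩, hi]
  have hh := isBoundedOp_homotopyOp hν (M := m + 1)
  refine ⟨fun x => dualLift (avgOp μ) b x - dualLift (homotopyOp ν) c x,
    (bdd_dualLift (isBoundedOp_avgOp hμ) hbb).sub (bdd_dualLift hh hcb),
    (isEquivariantCochain_dualLift_avgOp hμ hμG hbb hbG).sub
      (isEquivariantCochain_dualLift hh (fun g _ hF y => homotopyOp_smul hν hνG g hF y) hcb hcG),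
    ?_⟩
  funext x
  ext w
  -- averaging `c` against `i_* μ` gives `δ` of the average of `b`, and the prism identity
  -- for `i_* μ` makes `c` cohomologous to that average
  have hrestrict : (fun y => c (fun j => i (y j)) w) = delta m fun z => b z w :=
    funext fun y => by rw [hcb', delta_apply_apply]
  have hprism := delta_homotopyOp_add_homotopyOp_delta hν (fun y => c y w) x
  rw [delta_apply_eq_zero hc, map_zero, Pi.zero_apply, add_zero, partialMean_zero_apply,
    iterMean_funLeft, hrestrict, ← avgOp_apply, ← delta_avgOp hμ] at hprism
  rw [delta_apply_apply]
  simp only [sub_apply, dualLift_apply (isBoundedOp_avgOp hμ) hbb, dualLift_apply hh hcb]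
  rw [show (fun y => avgOp μ (fun a => b a w) y - homotopyOp ν (fun a => c a w) y)
    = avgOp μ (fun a => b a w) - homotopyOp ν (fun a => c a w) from rfl, delta_sub, Pi.sub_apply]
  linarith

end Restriction
section RelativeAmenability

variable {S : Type*}

theorem Bdd.mem_Linf {F : S → ℝ} (hF : Bdd F) : F ∈ Linf S := by
  obtain ⟨C, hC⟩ := hF
  exact ⟨C, fun s => Real.norm_eq_abs (F s) ▸ hC s⟩

theorem IsMean_s12.of_nonneg {m : (S → ℝ) →ₗ[ℝ] ℝ} (hconst : ∀ r : ℝ, m (fun _ => r) = r)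
    (hnonneg : ∀ F : S → ℝ, Bdd F → (∀ s, 0 ≤ F s) → 0 ≤ m F) : IsMean_s12 m := by
  refine ⟨hconst, fun F C hC => ?_⟩
  have hF : ∀ s, |F s| ≤ C := fun s => Real.norm_eq_abs (F s) ▸ hC s
  have hupper := hnonneg (fun s => C - F s)
    ⟨|C| + C, fun s => (norm_sub_le _ _).trans (add_le_add (Real.norm_eq_abs C).le (hC s))⟩
    fun s => by linarith [le_abs_self (F s), hF s]
  have hlower := hnonneg (fun s => C + F s)
    ⟨|C| + C, fun s => (norm_add_le _ _).trans (add_le_add (Real.norm_eq_abs C).le (hC s))⟩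
    fun s => by linarith [neg_abs_le (F s), hF s]
  rw [show (fun s => C - F s) = (fun _ => C) - F from rfl, map_sub, hconst] at hupper
  rw [show (fun s => C + F s) = (fun _ => C) + F from rfl, map_add, hconst] at hlower
  rw [Real.norm_eq_abs, abs_le]
  constructor <;> linarith

theorem InvariantMean.exists_isMean {K : Type*} [Group K] [MulAction K S]
    (h : InvariantMean K S) :
    ∃ m : (S → ℝ) →ₗ[ℝ] ℝ, IsMean_s12 m ∧
      ∀ (k : K) (F : S → ℝ), Bdd F → m (fun s => F (k • s)) = m F := by
  obtain ⟨m₀, hm₀1, hm₀pos, hm₀inv⟩ := h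
  obtain ⟨m, hm⟩ := LinearMap.exists_extend m₀
  have hext : ∀ F (hF : Bdd F), m F = m₀ ⟨F, hF.mem_Linf⟩ :=
    fun F hF => LinearMap.congr_fun hm ⟨F, hF.mem_Linf⟩
  refine ⟨m, IsMean_s12.of_nonneg (fun r => ?_) (fun F hF hF0 => ?_), fun k F hF => ?_⟩
  · rw [hext _ ⟨|r|, fun _ => (Real.norm_eq_abs r).le⟩]
    calc m₀ ⟨fun _ => r, _⟩ = m₀ (r • constLinf S 1) :=
          congrArg m₀ (Subtype.ext (funext fun _ => (mul_one r).symm))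
      _ = r := by rw [map_smul, hm₀1, smul_eq_mul, mul_one]
  · rw [hext F hF]
    exact hm₀pos _ hF0
  · obtain ⟨C, hC⟩ := hF
    rw [hext F ⟨C, hC⟩, hext _ ⟨C, fun s => hC (k • s)⟩,
      ← hm₀inv k⁻¹ ⟨F, Bdd.mem_Linf ⟨C, hC⟩⟩]
    congr 1
    ext s
    simp [compL]

variable {G : Type u} [Group G]

/-- The map `H/(F|_H) → G/F`, `hK ↦ hL`, for a chosen `L ∈ F` with `K = L ∩ H`. -/
noncomputable def restrictCos (F : Set (Subgroup G)) (H : Subgroup G) :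
    Cos H (restrictedFamily F H) → Cos G F := fun x =>
  ⟨⟨x.1.2.choose, x.1.2.choose_spec.1⟩, Quotient.map' Subtype.val (fun a b hab => by
    have hK := x.1.2.choose_spec.2
    rw [QuotientGroup.leftRel_apply, hK, Subgroup.mem_subgroupOf] at hab
    simpa [QuotientGroup.leftRel_apply] using hab) x.2⟩

theorem restrictCos_smul (F : Set (Subgroup G)) (H : Subgroup G) (h : H)
    (x : Cos H (restrictedFamily F H)) :
    restrictCos F H (h • x) = (h : G) • restrictCos F H x := by
  obtain ⟨K, q⟩ := x
  induction q using Quotient.inductionOn'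
  rfl

theorem exists_isMean_family_of_relativelyAmenable {F F' : Set (Subgroup G)}
    (hamen : ∀ H : Subgroup G, H ∈ F' → RelativelyAmenable H (restrictedFamily F H)) :
    ∃ μ : Cos G F' → (Cos G F → ℝ) →ₗ[ℝ] ℝ, (∀ t, IsMean_s12 (μ t)) ∧ IsEquivariantFamily G μ := by
  choose m hm hmH using fun H : F' => (hamen H H.2).exists_isMean
  refine ⟨fun t => m t.1 ∘ₗ LinearMap.funLeft ℝ ℝ fun σ => t.2.out • restrictCos F t.1 σ,
    fun t => (hm t.1).comp_funLeft _, ?_⟩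
  rintro g ⟨H, q⟩ Φ ⟨C, hC⟩
  obtain ⟨h, hh⟩ := QuotientGroup.mk_out_eq_mul (H : Subgroup G) (g * q.out)
  have hgq : g • q = QuotientGroup.mk (g * q.out) := by
    conv_lhs => rw [← QuotientGroup.out_eq' q]
    rfl
  change m H (fun σ => Φ ((g • q).out • restrictCos F H σ))
    = m H (fun σ => Φ (g • q.out • restrictCos F H σ))
  -- the representatives `(g • q).out` and `g * q.out` differ by `h ∈ H`, which `m H` ignores
  have hshift : ∀ σ, Φ ((g • q).out • restrictCos F H σ)
      = Φ ((g * q.out) • restrictCos F H (h • σ)) := fun σ => by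
    rw [hgq, hh, restrictCos_smul, mul_smul]
  simp only [hshift]
  refine (hmH H h (fun σ => Φ ((g * q.out) • restrictCos F H σ)) ⟨C, fun σ => hC _⟩).trans ?_
  simp only [mul_smul]

end RelativeAmenability

theorem canonical_map_iso_of_relatively_amenable_general (G : Type u) [Group G]
    (F F' : Set (Subgroup G)) (hFF' : F ⊆ F')
    (hamen : ∀ H : Subgroup G, H ∈ F' →
      RelativelyAmenable H (restrictedFamily F H))
    (W : Type v) [NormedAddCommGroup W] [NormedSpace ℝ W] [DistribMulAction G W]
    [SMulCommClass G ℝ W] (hW : ∀ (g : G) (w : W), ‖g • w‖ = ‖w‖) :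
    -- degree 0: bijection on `0`-cocycles
    ((∀ f : (Fin 1 → Cos G F) → (W →L[ℝ] ℝ),
        Bdd f →
        (∀ (g : G) (x : Fin 1 → Cos G F),
          f (fun j => g • x j) = (f x).comp (smulCLM hW g⁻¹)) →
        delta 0 f = 0 →
        ∃ c : (Fin 1 → Cos G F') → (W →L[ℝ] ℝ),
          Bdd c ∧
          (∀ (g : G) (x : Fin 1 → Cos G F'),
            c (fun j => g • x j) = (c x).comp (smulCLM hW g⁻¹)) ∧
          delta 0 c = 0 ∧
          ∀ x : Fin 1 → Cos G F, c (fun j => inclCos hFF' (x j)) = f x) ∧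
      ∀ c c' : (Fin 1 → Cos G F') → (W →L[ℝ] ℝ),
        Bdd c → (∀ (g : G) (x : Fin 1 → Cos G F'),
          c (fun j => g • x j) = (c x).comp (smulCLM hW g⁻¹)) → delta 0 c = 0 →
        Bdd c' → (∀ (g : G) (x : Fin 1 → Cos G F'),
          c' (fun j => g • x j) = (c' x).comp (smulCLM hW g⁻¹)) → delta 0 c' = 0 →
        (∀ x : Fin 1 → Cos G F,
          c (fun j => inclCos hFF' (x j)) = c' (fun j => inclCos hFF' (x j))) →
        c = c') ∧
    -- degrees `n ≥ 1`: surjectivity and injectivity up to coboundaries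
    ∀ m : ℕ,
      (∀ f : (Fin (m + 2) → Cos G F) → (W →L[ℝ] ℝ),
        Bdd f →
        (∀ (g : G) (x : Fin (m + 2) → Cos G F),
          f (fun j => g • x j) = (f x).comp (smulCLM hW g⁻¹)) →
        delta (m + 1) f = 0 →
        ∃ c : (Fin (m + 2) → Cos G F') → (W →L[ℝ] ℝ),
          Bdd c ∧
          (∀ (g : G) (x : Fin (m + 2) → Cos G F'),
            c (fun j => g • x j) = (c x).comp (smulCLM hW g⁻¹)) ∧
          delta (m + 1) c = 0 ∧
          ∃ b : (Fin (m + 1) → Cos G F) → (W →L[ℝ] ℝ),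
            Bdd b ∧
            (∀ (g : G) (x : Fin (m + 1) → Cos G F),
              b (fun j => g • x j) = (b x).comp (smulCLM hW g⁻¹)) ∧
            ∀ x : Fin (m + 2) → Cos G F,
              c (fun j => inclCos hFF' (x j)) = f x + delta m b x) ∧
      ∀ c : (Fin (m + 2) → Cos G F') → (W →L[ℝ] ℝ),
        Bdd c →
        (∀ (g : G) (x : Fin (m + 2) → Cos G F'),
          c (fun j => g • x j) = (c x).comp (smulCLM hW g⁻¹)) →
        delta (m + 1) c = 0 →
        (∃ b : (Fin (m + 1) → Cos G F) → (W →L[ℝ] ℝ),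
          Bdd b ∧
          (∀ (g : G) (x : Fin (m + 1) → Cos G F),
            b (fun j => g • x j) = (b x).comp (smulCLM hW g⁻¹)) ∧
          ∀ x : Fin (m + 2) → Cos G F,
            c (fun j => inclCos hFF' (x j)) = delta m b x) →
        ∃ b' : (Fin (m + 1) → Cos G F') → (W →L[ℝ] ℝ),
          Bdd b' ∧
          (∀ (g : G) (x : Fin (m + 1) → Cos G F'),
            b' (fun j => g • x j) = (b' x).comp (smulCLM hW g⁻¹)) ∧
          c = delta m b' := by
  obtain ⟨μ, hμ, hμG⟩ := exists_isMean_family_of_relativelyAmenable hamen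
  have hi : ∀ (g : G) (s : Cos G F), inclCos hFF' (g • s) = g • inclCos hFF' s := fun _ _ => rfl
  refine ⟨⟨fun f hfb hfG hf => exists_cocycle_restrict_eq_of_delta_zero_eq_zero hμ hμG hfb hfG hf,
    fun c c' _ _ hc _ _ hc' h => eq_of_restrict_eq_of_delta_zero_eq_zero hμ hc hc' h⟩,
    fun m => ⟨fun f hfb hfG hf => exists_cocycle_restrict_eq_add_delta hμ hμG hi hfb hfG hf, ?_⟩⟩
  rintro c hcb hcG hc ⟨b, hbb, hbG, hcb'⟩
  exact exists_eq_delta_of_restrict_eq_delta hμ hμG hi hcb hcG hc hbb hbG hcb'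

/-- Theorem 4.8, (i) ⇒ (ii).  Let `F ⊆ G'` be two families of
subgroups of `G` such that every `H ∈ G'` is amenable relative to `F|_H`.  Then for
every normed `ℝG`-module `W` and every `n ≥ 0`, restriction along the inclusion
`(G/F)^{n+1} ⊆ (G/G')^{n+1}` induces an isomorphism
`H^n_{G',b}(G; W^#) → H^n_{F,b}(G; W^#)`: in degree `0` it is a bijection on
cocycles, and in each degree `n ≥ 1` it is surjective and injective up to
coboundaries of bounded equivariant cochains. -/
theorem canonical_map_iso_of_relatively_amenable (G : Type u) [Group G]
    (F F' : Set (Subgroup G)) (hF : IsFamily F) (hF' : IsFamily F') (hFF' : F ⊆ F')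
    (hamen : ∀ H : Subgroup G, H ∈ F' →
      RelativelyAmenable H (restrictedFamily F H))
    (W : Type v) [NormedAddCommGroup W] [NormedSpace ℝ W] [DistribMulAction G W]
    [SMulCommClass G ℝ W] (hW : ∀ (g : G) (w : W), ‖g • w‖ = ‖w‖) :
    -- degree 0: bijection on `0`-cocycles
    ((∀ f : (Fin 1 → Cos G F) → (W →L[ℝ] ℝ),
        Bdd f →
        (∀ (g : G) (x : Fin 1 → Cos G F),
          f (fun j => g • x j) = (f x).comp (smulCLM hW g⁻¹)) →
        delta 0 f = 0 →
        ∃ c : (Fin 1 → Cos G F') → (W →L[ℝ] ℝ),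
          Bdd c ∧
          (∀ (g : G) (x : Fin 1 → Cos G F'),
            c (fun j => g • x j) = (c x).comp (smulCLM hW g⁻¹)) ∧
          delta 0 c = 0 ∧
          ∀ x : Fin 1 → Cos G F, c (fun j => inclCos hFF' (x j)) = f x) ∧
      ∀ c c' : (Fin 1 → Cos G F') → (W →L[ℝ] ℝ),
        Bdd c → (∀ (g : G) (x : Fin 1 → Cos G F'),
          c (fun j => g • x j) = (c x).comp (smulCLM hW g⁻¹)) → delta 0 c = 0 →
        Bdd c' → (∀ (g : G) (x : Fin 1 → Cos G F'),
          c' (fun j => g • x j) = (c' x).comp (smulCLM hW g⁻¹)) → delta 0 c' = 0 →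
        (∀ x : Fin 1 → Cos G F,
          c (fun j => inclCos hFF' (x j)) = c' (fun j => inclCos hFF' (x j))) →
        c = c') ∧
    -- degrees `n ≥ 1`: surjectivity and injectivity up to coboundaries
    ∀ m : ℕ,
      (∀ f : (Fin (m + 2) → Cos G F) → (W →L[ℝ] ℝ),
        Bdd f →
        (∀ (g : G) (x : Fin (m + 2) → Cos G F),
          f (fun j => g • x j) = (f x).comp (smulCLM hW g⁻¹)) →
        delta (m + 1) f = 0 →
        ∃ c : (Fin (m + 2) → Cos G F') → (W →L[ℝ] ℝ),
          Bdd c ∧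
          (∀ (g : G) (x : Fin (m + 2) → Cos G F'),
            c (fun j => g • x j) = (c x).comp (smulCLM hW g⁻¹)) ∧
          delta (m + 1) c = 0 ∧
          ∃ b : (Fin (m + 1) → Cos G F) → (W →L[ℝ] ℝ),
            Bdd b ∧
            (∀ (g : G) (x : Fin (m + 1) → Cos G F),
              b (fun j => g • x j) = (b x).comp (smulCLM hW g⁻¹)) ∧
            ∀ x : Fin (m + 2) → Cos G F,
              c (fun j => inclCos hFF' (x j)) = f x + delta m b x) ∧
      ∀ c : (Fin (m + 2) → Cos G F') → (W →L[ℝ] ℝ),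
        Bdd c →
        (∀ (g : G) (x : Fin (m + 2) → Cos G F'),
          c (fun j => g • x j) = (c x).comp (smulCLM hW g⁻¹)) →
        delta (m + 1) c = 0 →
        (∃ b : (Fin (m + 1) → Cos G F) → (W →L[ℝ] ℝ),
          Bdd b ∧
          (∀ (g : G) (x : Fin (m + 1) → Cos G F),
            b (fun j => g • x j) = (b x).comp (smulCLM hW g⁻¹)) ∧
          ∀ x : Fin (m + 2) → Cos G F,
            c (fun j => inclCos hFF' (x j)) = delta m b x) →
        ∃ b' : (Fin (m + 1) → Cos G F') → (W →L[ℝ] ℝ),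
          Bdd b' ∧
          (∀ (g : G) (x : Fin (m + 1) → Cos G F'),
            b' (fun j => g • x j) = (b' x).comp (smulCLM hW g⁻¹)) ∧
          c = delta m b' :=
  canonical_map_iso_of_relatively_amenable_general G F F' hFF' hamen W hW

end RelBdd
end
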